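/- arXiv:1807.02198 — 9 statements merged into one kernel-verified Lean document; each statement's English description precedes it below -/
import Mathlib

section
/- Let ℝⁿ and ℝᵐ carry arbitrary norms ‖·‖ with dual norms ‖·‖_*. Let u, u* ∈ ℝⁿ and v, v* ∈ ℝᵐ satisfy ‖u‖ = ‖v*‖_* = 1. Then ⟨u*,u⟩ = ⟨v*,v⟩ if and only if there exists an m×n matrix B with Bu = v and Bᵀv* = u*. In particular, if ⟨u*,u⟩ = ⟨v*,v⟩ and z* ∈ ℝⁿ, w ∈ ℝᵐ are chosen with ‖w‖ = ‖z*‖_* = ⟨z*,u⟩ = ⟨v*,w⟩ = 1, then B := v z*ᵀ + w u*ᵀ − ⟨u*,u⟩ w z*ᵀ is such a matrix. -/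
/-- Norm attainment in finite dimensions. -/
lemma attain {Y : Type*} [NormedAddCommGroup Y] [NormedSpace ℝ Y]
    [FiniteDimensional ℝ Y] (f : Y →L[ℝ] ℝ) (hf : ‖f‖ = 1) :
    ∃ w : Y, ‖w‖ = 1 ∧ f w = 1 := by
  have hnt : Nontrivial Y := by
    by_contra h
    have : Subsingleton Y := not_nontrivial_iff_subsingleton.mp h
    have : f = 0 := Subsingleton.elim _ _
    simp [this] at hf
  obtain ⟨y0, hy0⟩ := NormedSpace.exists_lt_norm ℝ Y 0
  have hy0' : y0 ≠ 0 := by intro h; simp [h] at hy0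
  set S : Set Y := Metric.sphere 0 1 with hS
  have hSne : S.Nonempty := ⟨‖y0‖⁻¹ • y0, by
    simp [hS, norm_smul, inv_mul_cancel₀ (norm_ne_zero_iff.mpr hy0')]⟩
  have hSc : IsCompact S := isCompact_sphere 0 1
  obtain ⟨w, hwS, hw⟩ := hSc.exists_isMaxOn hSne f.continuous.continuousOn
  have hwn : ‖w‖ = 1 := by simpa [hS] using hwS
  have hub : ∀ y : Y, ‖y‖ = 1 → ‖f y‖ ≤ f w := by
    intro y hy
    have h1 : f y ≤ f w := hw (show y ∈ S by simp [hS, hy])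
    have h2 : f (-y) ≤ f w := hw (show -y ∈ S by simp [hS, hy])
    rw [map_neg] at h2
    rcases abs_cases (f y) with ⟨h, _⟩ | ⟨h, _⟩ <;>
      simp [Real.norm_eq_abs, h] <;> linarith
  have hle : ‖f‖ ≤ f w := by
    apply f.opNorm_le_bound
    · have := hub w hwn
      have := norm_nonneg (f w)
      linarith [le_abs_self (f w)]
    · intro x
      rcases eq_or_ne x 0 with rfl | hx
      · simp
      · have hxn : ‖x‖ ≠ 0 := norm_ne_zero_iff.mpr hx
        have := hub (‖x‖⁻¹ • x) (by simp [norm_smul, inv_mul_cancel₀ hxn])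
        rw [map_smul] at this
        simp only [smul_eq_mul, Real.norm_eq_abs, abs_mul, abs_inv, abs_norm] at this
        have h2 : ‖x‖⁻¹ * |f x| ≤ f w := this
        calc ‖f x‖ = ‖x‖ * (‖x‖⁻¹ * |f x|) := by
              field_simp [Real.norm_eq_abs]
              rw [Real.norm_eq_abs]
          _ ≤ ‖x‖ * f w := by
              exact mul_le_mul_of_nonneg_left h2 (norm_nonneg x)
          _ = f w * ‖x‖ := mul_comm _ _
  have hge : f w ≤ ‖f‖ := by
    calc f w ≤ ‖f w‖ := le_abs_self _
      _ ≤ ‖f‖ * ‖w‖ := f.le_opNorm w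
      _ = ‖f‖ := by rw [hwn, mul_one]
  exact ⟨w, hwn, le_antisymm (hge.trans_eq hf) (hf ▸ hle)⟩

/-- for unit vectors `u` (primal) and `v*` (dual), the compatibility
condition `⟨u*,u⟩ = ⟨v*,v⟩` holds iff there is a linear map `B` with `Bu = v` and
`Bᵀv* = u*`; moreover `B := v z*ᵀ + w u*ᵀ − ⟨u*,u⟩ w z*ᵀ` is such a map whenever
`‖w‖ = ‖z*‖_* = ⟨z*,u⟩ = ⟨v*,w⟩ = 1`. -/
theorem statement1 {E Y : Type*} [NormedAddCommGroup E] [NormedSpace ℝ E]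
    [NormedAddCommGroup Y] [NormedSpace ℝ Y]
    [FiniteDimensional ℝ E] [FiniteDimensional ℝ Y]
    (u : E) (us : E →L[ℝ] ℝ) (v : Y) (vs : Y →L[ℝ] ℝ)
    (hu : ‖u‖ = 1) (hvs : ‖vs‖ = 1) :
    (us u = vs v ↔ ∃ B : E →L[ℝ] Y, B u = v ∧ vs.comp B = us) ∧
    (us u = vs v → ∀ (zs : E →L[ℝ] ℝ) (w : Y),
      ‖w‖ = 1 → ‖zs‖ = 1 → zs u = 1 → vs w = 1 →
      ((zs.smulRight v + us.smulRight w - us u • zs.smulRight w) u = v ∧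
       vs.comp (zs.smulRight v + us.smulRight w - us u • zs.smulRight w) = us)) := by
  have key : us u = vs v → ∀ (zs : E →L[ℝ] ℝ) (w : Y),
      ‖w‖ = 1 → ‖zs‖ = 1 → zs u = 1 → vs w = 1 →
      ((zs.smulRight v + us.smulRight w - us u • zs.smulRight w) u = v ∧
       vs.comp (zs.smulRight v + us.smulRight w - us u • zs.smulRight w) = us) := by
    intro hc zs w hw hzs hzu hvw
    constructor
    · simp [ContinuousLinearMap.smulRight_apply, hzu]
    · ext x
      simp only [ContinuousLinearMap.comp_apply, ContinuousLinearMap.sub_apply,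
        ContinuousLinearMap.add_apply, ContinuousLinearMap.smul_apply,
        ContinuousLinearMap.smulRight_apply, map_add, map_sub, map_smul,
        smul_eq_mul, hvw, ← hc]
      ring
  refine ⟨⟨fun hc => ?_, fun ⟨B, hB1, hB2⟩ => by rw [← hB2]; simp [hB1]⟩, key⟩
  have hu0 : u ≠ 0 := by intro h; simp [h] at hu
  obtain ⟨zs, hzs, hzu⟩ := exists_dual_vector ℝ u (norm_ne_zero_iff.mpr hu0)
  obtain ⟨w, hw, hvw⟩ := attain vs hvs
  rw [hu] at hzu
  norm_cast at hzu
  obtain ⟨h1, h2⟩ := key hc zs w hw hzs hzu hvw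
  exact ⟨_, h1, h2⟩
end

section
/- Let F: ℝⁿ ⇉ ℝᵐ be a set-valued mapping with closed graph and (x̄,ȳ) ∈ gph F. Then rg[F](x̄,ȳ) ≥ inf{ ‖v‖ : v ∈ DF(x̄,ȳ)(u) for some u with ‖u‖ = 1 }. -/
open Filter Topology Set ENNReal NNReal

noncomputable section

variable {E Y : Type*} [NormedAddCommGroup E] [NormedSpace ℝ E]
  [NormedAddCommGroup Y] [NormedSpace ℝ Y]

/-- The tangent (Bouligand) cone to `A` at `x`:
`T_A(x) := {u : ∃ uᵢ → u, tᵢ ↓ 0 with x + tᵢ uᵢ ∈ A}`. -/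
def tangentConeB (A : Set E) (x : E) : Set E :=
  {u | ∃ (t : ℕ → ℝ) (c : ℕ → E), (∀ i, 0 < t i) ∧ Tendsto t atTop (𝓝 0) ∧
    Tendsto c atTop (𝓝 u) ∧ ∀ i, x + t i • c i ∈ A}

/-- The Fréchet normal cone to `A` at `x` (empty outside `A`):
the polar of the tangent cone. -/
def frechetNC (A : Set E) (x : E) : Set (E →L[ℝ] ℝ) :=
  {p | x ∈ A ∧ ∀ u ∈ tangentConeB A x, p u ≤ 0}

/-- The limiting normal cone to `A` at `x`. -/
def limitingNC (A : Set E) (x : E) : Set (E →L[ℝ] ℝ) :=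
  {p | ∃ (xs : ℕ → E) (ps : ℕ → E →L[ℝ] ℝ),
    Tendsto xs atTop (𝓝 x) ∧ Tendsto ps atTop (𝓝 p) ∧
    ∀ i, ps i ∈ frechetNC A (xs i)}

/-- The directional limiting normal cone to `A` at `x` in the direction `u`. -/
def dirLimitingNC (A : Set E) (x u : E) : Set (E →L[ℝ] ℝ) :=
  {p | ∃ (t : ℕ → ℝ) (us : ℕ → E) (ps : ℕ → (E →L[ℝ] ℝ)),
    (∀ i, 0 < t i) ∧ Tendsto t atTop (𝓝 0) ∧ Tendsto us atTop (𝓝 u) ∧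
    Tendsto ps atTop (𝓝 p) ∧ ∀ i, ps i ∈ frechetNC A (x + t i • us i)}

/-- `A` is directionally regular at `x` in the direction `u`. -/
def DirRegularAt (A : Set E) (x u : E) : Prop :=
  dirLimitingNC A x u =
    {p | ∀ (t : ℕ → ℝ), (∀ i, 0 < t i) → Tendsto t atTop (𝓝 0) →
      ∃ (us : ℕ → E) (ps : ℕ → (E →L[ℝ] ℝ)), Tendsto us atTop (𝓝 u) ∧
        Tendsto ps atTop (𝓝 p) ∧ ∀ i, ps i ∈ frechetNC A (x + t i • us i)}

/-- `A` is directionally regular at `x` (in all directions). -/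
def DirRegular (A : Set E) (x : E) : Prop := ∀ u, DirRegularAt A x u

/-- The pair `(u*, v*)` viewed as a linear functional on `E × Y`. -/
def pairFun (us : E →L[ℝ] ℝ) (vs : Y →L[ℝ] ℝ) : (E × Y) →L[ℝ] ℝ :=
  us.coprod vs

/-- The primal-dual derivative of the mapping with graph `G` at `z ∈ G`:
`D̂F(xb,yb)(u,v*) := {(u*,v) : (u*,−v*) ∈ N̄_{gph F}((xb,yb);(u,v))}`. -/
def pdDeriv (G : Set (E × Y)) (z : E × Y) (u : E) (vs : Y →L[ℝ] ℝ) :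
    Set ((E →L[ℝ] ℝ) × Y) :=
  {w | pairFun w.1 (-vs) ∈ dirLimitingNC G z (u, w.2)}

/-- `rg[F](xb,yb)`. -/
def rgL (G : Set (E × Y)) (z : E × Y) : ℝ≥0∞ :=
  ⨅ (u : E) (vs : Y →L[ℝ] ℝ) (w : (E →L[ℝ] ℝ) × Y) (_ : ‖u‖ = 1)
    (_ : ‖vs‖ = 1) (_ : w ∈ pdDeriv G z u vs),
    ENNReal.ofReal (max ‖w.1‖ ‖w.2‖)

/-- `rg⋄[F](xb,yb)`. -/
def rgDiamond (G : Set (E × Y)) (z : E × Y) : ℝ≥0∞ :=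
  ⨅ (u : E) (vs : Y →L[ℝ] ℝ) (w : (E →L[ℝ] ℝ) × Y) (_ : ‖u‖ = 1)
    (_ : ‖vs‖ = 1) (_ : w ∈ pdDeriv G z u vs) (_ : w.1 u = vs w.2),
    ENNReal.ofReal (max ‖w.1‖ ‖w.2‖)

/-- `rg°[F](xb,yb)`. -/
def rgCirc (G : Set (E × Y)) (z : E × Y) : ℝ≥0∞ :=
  ⨅ (u : E) (vs : Y →L[ℝ] ℝ) (B : E →L[ℝ] Y) (_ : ‖u‖ = 1) (_ : ‖vs‖ = 1)
    (_ : (vs.comp B, B u) ∈ pdDeriv G z u vs),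
    ENNReal.ofReal ‖B‖

/-- `r̂g[F](xb,yb)`. -/
def rgHat (G : Set (E × Y)) (z : E × Y) : ℝ≥0∞ :=
  ⨅ (u : E) (vs : Y →L[ℝ] ℝ) (w : (E →L[ℝ] ℝ) × Y) (_ : ‖u‖ = 1)
    (_ : ‖vs‖ = 1) (_ : w ∈ pdDeriv G z u vs),
    ENNReal.ofReal (‖w.1‖ + ‖w.2‖)

/-- `rg†[F](xb,yb)` (intended for the Euclidean setting). -/
def rgDagger (G : Set (E × Y)) (z : E × Y) : ℝ≥0∞ :=
  ⨅ (u : E) (vs : Y →L[ℝ] ℝ) (w : (E →L[ℝ] ℝ) × Y) (_ : ‖u‖ = 1)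
    (_ : ‖vs‖ = 1) (_ : w ∈ pdDeriv G z u vs) (_ : w.1 u = vs w.2),
    ENNReal.ofReal (Real.sqrt (‖w.1‖ ^ 2 + ‖w.2‖ ^ 2 - (w.1 u) ^ 2))

/-- Metric subregularity at `xb` for `yb` of the mapping with graph `G`. -/
def MetricSubregAt (G : Set (E × Y)) (xb : E) (yb : Y) : Prop :=
  (xb, yb) ∈ G ∧ ∃ κ : ℝ≥0, ∃ U ∈ 𝓝 xb, ∀ x ∈ U,
    EMetric.infEdist x {x' | (x', yb) ∈ G} ≤
      (κ : ℝ≥0∞) * EMetric.infEdist yb {y | (x, y) ∈ G}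

/-- The graph of `F + h`, where `G` is the graph of `F`. -/
def sumGraph (G : Set (E × Y)) (h : E → Y) : Set (E × Y) :=
  {p | (p.1, p.2 - h p.1) ∈ G}

/-- `h` is Lipschitz continuous around `xb`. -/
def LipschitzAround (h : E → Y) (xb : E) : Prop :=
  ∃ K : ℝ≥0, ∃ U ∈ 𝓝 xb, LipschitzOnWith K h U

/-- The Lipschitz modulus `lip(h;xb)`. -/
def lipMod (h : E → Y) (xb : E) : ℝ≥0∞ :=
  Filter.limsup (fun p : E × E => ENNReal.ofReal (‖h p.1 - h p.2‖ / ‖p.1 - p.2‖))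
    ((𝓝 xb ×ˢ 𝓝 xb) ⊓ 𝓟 {p : E × E | p.1 ≠ p.2})

/-- The radius of metric subregularity w.r.t. Lipschitz perturbations. -/
def radLip (G : Set (E × Y)) (xb : E) (yb : Y) : ℝ≥0∞ :=
  ⨅ (h : E → Y) (_ : LipschitzAround h xb) (_ : h xb = 0)
    (_ : ¬ MetricSubregAt (sumGraph G h) xb yb), lipMod h xb

/-- The Clarke generalized Jacobian of `h` at `x`. -/
def clarkeJac (h : E → Y) (x : E) : Set (E →L[ℝ] Y) :=
  convexHull ℝ {B | ∃ xs : ℕ → E, Tendsto xs atTop (𝓝 x) ∧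
    (∀ i, DifferentiableAt ℝ h (xs i)) ∧
    Tendsto (fun i => fderiv ℝ h (xs i)) atTop (𝓝 B)}

/-- `h` is semismooth at `xb`. -/
def SemismoothAt (h : E → Y) (xb : E) : Prop :=
  LipschitzAround h xb ∧
  ∀ u : E, ∃ L : Y, ∀ (t : ℕ → ℝ) (us : ℕ → E) (V : ℕ → E →L[ℝ] Y),
    (∀ i, 0 < t i) → Tendsto t atTop (𝓝 0) → Tendsto us atTop (𝓝 u) →
    (∀ i, V i ∈ clarkeJac h (xb + t i • us i)) →
    Tendsto (fun i => V i (us i)) atTop (𝓝 L)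

/-- `h` is continuously differentiable around `xb`. -/
def C1Around (h : E → Y) (xb : E) : Prop :=
  ∃ U ∈ 𝓝 xb, ContDiffOn ℝ 1 h U

/-- The radius of metric subregularity w.r.t. semismooth perturbations. -/
def radSS (G : Set (E × Y)) (xb : E) (yb : Y) : ℝ≥0∞ :=
  ⨅ (h : E → Y) (_ : SemismoothAt h xb) (_ : h xb = 0)
    (_ : ¬ MetricSubregAt (sumGraph G h) xb yb), lipMod h xb

/-- The radius of metric subregularity w.r.t. `C¹` perturbations. -/
def radC1 (G : Set (E × Y)) (xb : E) (yb : Y) : ℝ≥0∞ :=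
  ⨅ (h : E → Y) (_ : C1Around h xb) (_ : h xb = 0)
    (_ : ¬ MetricSubregAt (sumGraph G h) xb yb), lipMod h xb

-- Fréchet normal cones are empty off `A`, so the points `x + tᵢ uᵢ` witnessing `p` lie in `A`.
theorem mem_tangentConeB_of_mem_dirLimitingNC {A : Set E} {x u : E} {p : E →L[ℝ] ℝ}
    (hp : p ∈ dirLimitingNC A x u) : u ∈ tangentConeB A x := by
  obtain ⟨t, us, _, ht, ht0, hus, _, hmem⟩ := hp
  exact ⟨t, us, ht, ht0, hus, fun i => (hmem i).1⟩

theorem mem_tangentConeB_of_mem_pdDeriv {G : Set (E × Y)} {z : E × Y} {u : E}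
    {vs : Y →L[ℝ] ℝ} {w : (E →L[ℝ] ℝ) × Y} (hw : w ∈ pdDeriv G z u vs) :
    (u, w.2) ∈ tangentConeB G z :=
  mem_tangentConeB_of_mem_dirLimitingNC hw

theorem statement5_general
    (G : Set (E × Y)) (xb : E) (yb : Y) :
    (⨅ (u : E) (v : Y) (_ : ‖u‖ = 1) (_ : (u, v) ∈ tangentConeB G (xb, yb)),
      ENNReal.ofReal ‖v‖) ≤ rgL G (xb, yb) := by
  refine le_iInf fun u => le_iInf fun vs => le_iInf fun w => le_iInf fun hu =>
    le_iInf fun _ => le_iInf fun hw => ?_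
  calc (⨅ (u : E) (v : Y) (_ : ‖u‖ = 1) (_ : (u, v) ∈ tangentConeB G (xb, yb)),
        ENNReal.ofReal ‖v‖)
      ≤ ENNReal.ofReal ‖w.2‖ :=
        iInf₂_le_of_le u w.2 <| iInf₂_le_of_le hu (mem_tangentConeB_of_mem_pdDeriv hw) le_rfl
    _ ≤ ENNReal.ofReal (max ‖w.1‖ ‖w.2‖) := ENNReal.ofReal_le_ofReal (le_max_right _ _)

/-- `rg[F](xb,yb) ≥ inf{‖v‖ : v ∈ DF(xb,yb)(u), ‖u‖ = 1}`. -/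
theorem statement5 [FiniteDimensional ℝ E] [FiniteDimensional ℝ Y]
    (G : Set (E × Y)) (hG : IsClosed G) (xb : E) (yb : Y) (hz : (xb, yb) ∈ G) :
    (⨅ (u : E) (v : Y) (_ : ‖u‖ = 1) (_ : (u, v) ∈ tangentConeB G (xb, yb)),
      ENNReal.ofReal ‖v‖) ≤ rgL G (xb, yb) :=
  statement5_general G xb yb

end
end

section
/- Let F: ℝⁿ ⇉ ℝᵐ have closed graph, let h: ℝⁿ → ℝᵐ be Lipschitz continuous around u and strictly differentiable at u with derivative ∇h(u), and let (u,v) ∈ gph(F+h). Then N̄_{gph(h+F)}(u,v) = { (u*,v*) ∈ ℝⁿ × ℝᵐ : (u* + ∇h(u)ᵀv*, v*) ∈ N̄_{gph F}(u, v−h(u)) }. -/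
/-!
The map `(x, y) ↦ (x, y - h x)` is a bijection carrying `gph (F + h)` onto `gph F`; it and its
inverse are strictly differentiable at the base points, with derivatives the shears
`(a, b) ↦ (a, b ∓ ∇h(u) a)`. Strict differentiability at a single point only controls the
linearization error uniformly near that point, so it turns Fréchet normals at nearby points into
`ε`-normals rather than Fréchet normals. In finite dimensions, however, limits of `ε`-normals with
`ε ↓ 0` at points of a locally closed set are limiting normals: penalizing with a Euclidean norm and
applying Fermat's rule produces Fréchet normals nearby. Applied to the map and to its inverse this
gives both inclusions.
-/

open Filter Topology Set ENNReal NNReal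

noncomputable section

variable {E Y : Type*} [NormedAddCommGroup E] [NormedSpace ℝ E]
  [NormedAddCommGroup Y] [NormedSpace ℝ Y]

open Metric

lemma isClosed_inter_closedBall_of_le {X : Type*} [PseudoMetricSpace X] {A : Set X} {x y : X}
    {r s : ℝ} (hA : IsClosed (A ∩ closedBall x r)) (h : s + dist y x ≤ r) :
    IsClosed (A ∩ closedBall y s) := by
  rw [← inter_eq_right.mpr (closedBall_subset_closedBall' h), ← inter_assoc]
  exact hA.inter isClosed_closedBall

section NormalCones

variable {Z W : Type*} [NormedAddCommGroup Z] [NormedSpace ℝ Z]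
  [NormedAddCommGroup W] [NormedSpace ℝ W]

def epsNC (A : Set Z) (x : Z) (ε : ℝ) : Set (Z →L[ℝ] ℝ) :=
  {p | x ∈ A ∧ ∀ᶠ y in 𝓝 x, y ∈ A → p (y - x) ≤ ε * ‖y - x‖}

lemma epsNC_mono {A : Set Z} {x : Z} {ε ε' : ℝ} (h : ε ≤ ε') : epsNC A x ε ⊆ epsNC A x ε' :=
  fun _ ⟨hx, hp⟩ ↦ ⟨hx, hp.mono fun _ hy hyA ↦ (hy hyA).trans (by gcongr)⟩

theorem frechetNC_subset_epsNC [FiniteDimensional ℝ Z] {A : Set Z} {x : Z} {ε : ℝ}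
    (hε : 0 < ε) : frechetNC A x ⊆ epsNC A x ε := by
  rintro p ⟨hx, hp⟩
  refine ⟨hx, ?_⟩
  by_contra hfreq
  obtain ⟨xs, hxs, hbad⟩ := exists_seq_forall_of_frequently (not_eventually.mp hfreq)
  push Not at hbad
  set d : ℕ → Z := fun n ↦ xs n - x
  have hd : ∀ n, 0 < ‖d n‖ := fun n ↦ by
    by_contra! h0
    have := (hbad n).2
    rw [show xs n - x = 0 from norm_le_zero_iff.mp h0] at this
    simp at this
  obtain ⟨w, -, φ, hφ, hw⟩ := (isCompact_sphere (0 : Z) 1).tendsto_subseq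
    (x := fun n ↦ ‖d n‖⁻¹ • d n) fun n ↦ by simp [norm_smul, (hd n).ne']
  have hwT : w ∈ tangentConeB A x := by
    refine ⟨fun k ↦ ‖d (φ k)‖, _, fun k ↦ hd _, ?_, hw, fun k ↦ ?_⟩
    · exact (tendsto_iff_norm_sub_tendsto_zero.mp hxs).comp hφ.tendsto_atTop
    · simpa [smul_inv_smul₀ (hd _).ne', d] using (hbad (φ k)).1
  have hεw : ε ≤ p w := by
    refine ge_of_tendsto ((p.continuous.tendsto w).comp hw) (Eventually.of_forall fun k ↦ ?_)
    have := (hbad (φ k)).2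
    simp only [Function.comp_apply, map_smul, smul_eq_mul]
    rw [le_inv_mul_iff₀ (hd _), mul_comm]
    exact this.le
  linarith [hp w hwT]

lemma tangentConeB_subset_posTangentConeAt (A : Set Z) (x : Z) :
    tangentConeB A x ⊆ posTangentConeAt A x := by
  rintro w ⟨t, c, ht, ht0, hc, hmem⟩
  refine mem_tangentConeAt_of_seq atTop (fun i ↦ (t i).toNNReal⁻¹) (fun i ↦ t i • c i)
    ?_ (Eventually.of_forall hmem) ?_
  · simpa using ht0.smul hc
  · refine hc.congr fun i ↦ ?_
    rw [NNReal.smul_def, smul_smul, NNReal.coe_inv, Real.coe_toNNReal _ (ht i).le,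
      inv_mul_cancel₀ (ht i).ne', one_smul]

theorem neg_mem_frechetNC_of_isLocalMinOn {A : Set Z} {x : Z} {f : Z → ℝ} {f' : Z →L[ℝ] ℝ}
    (hx : x ∈ A) (hmin : IsLocalMinOn f A x) (hf : HasFDerivAt f f' x) : -f' ∈ frechetNC A x :=
  ⟨hx, fun w hw ↦ by
    simpa using hmin.hasFDerivWithinAt_nonneg hf.hasFDerivWithinAt
      (tangentConeB_subset_posTangentConeAt A x hw)⟩

theorem exists_frechetNC_near_of_forall_le {F : Type*} [NormedAddCommGroup F]
    [InnerProductSpace ℝ F] [ProperSpace Z] (T : Z ≃L[ℝ] F) {A : Set Z} {x : Z}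
    {p : Z →L[ℝ] ℝ} {ε r : ℝ} (hx : x ∈ A) (hε : 0 < ε) (hr : 0 < r)
    (hA : IsClosed (A ∩ closedBall x r))
    (hp : ∀ y ∈ A ∩ closedBall x r, p (y - x) ≤ ε * ‖y - x‖) :
    ∃ y, dist y x < r ∧ ∃ q ∈ frechetNC A y,
      ‖q - p‖ ≤ 2 * ‖(T : Z →L[ℝ] F)‖ * ‖(T.symm : F →L[ℝ] Z)‖ * ε := by
  set K := ‖(T.symm : F →L[ℝ] Z)‖
  have hK : ∀ z, ‖z‖ ≤ K * ‖T z‖ := fun z ↦ by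
    simpa using (T.symm : F →L[ℝ] Z).le_opNorm (T z)
  obtain ⟨ρ, hρ, hρr⟩ := exists_pos_mul_lt hr (ε * K ^ 2)
  -- Fermat's rule at a minimizer of this penalization of `-p` gives the Fréchet normal; the
  -- estimate on `p` keeps the minimizer inside the ball and the penalty's gradient small.
  set f : Z → ℝ := fun y ↦ ρ⁻¹ * ‖T y - T x‖ ^ 2 - (p y - p x)
  have hxS : x ∈ A ∩ closedBall x r := ⟨hx, mem_closedBall_self hr.le⟩
  obtain ⟨y, hyS, hmin⟩ :=
    ((isCompact_closedBall x r).of_isClosed_subset hA inter_subset_right).exists_isMinOn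
      ⟨x, hxS⟩ (by fun_prop : Continuous f).continuousOn
  have hfy : ρ⁻¹ * ‖T (y - x)‖ ^ 2 ≤ p (y - x) := by
    simpa [f, map_sub] using hmin hxS
  have hTy : ‖T (y - x)‖ ≤ ρ * ε * K := by
    have h1 : ρ⁻¹ * ‖T (y - x)‖ ^ 2 ≤ ε * (K * ‖T (y - x)‖) :=
      hfy.trans ((hp y hyS).trans (mul_le_mul_of_nonneg_left (hK _) hε.le))
    rw [inv_mul_le_iff₀ hρ] at h1
    have hc : 0 ≤ ρ * ε * K := by positivity
    nlinarith
  have hyr : dist y x < r :=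
    calc dist y x ≤ K * ‖T (y - x)‖ := by rw [dist_eq_norm]; exact hK _
      _ ≤ K * (ρ * ε * K) := by gcongr
      _ = ε * K ^ 2 * ρ := by ring
      _ < r := hρr
  have hloc : IsLocalMinOn f A y := by
    filter_upwards [mem_nhdsWithin_of_mem_nhds (closedBall_mem_nhds_of_mem hyr),
      self_mem_nhdsWithin] with z hz hzA
    exact hmin ⟨hzA, hz⟩
  have hf : HasFDerivAt f (ρ⁻¹ • (2 • (innerSL ℝ (T y - T x)).comp (T : Z →L[ℝ] F)) - p) y :=
    ((((T : Z →L[ℝ] F).hasFDerivAt.sub_const (T x)).norm_sq).const_mul ρ⁻¹).sub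
      (p.hasFDerivAt.sub_const (p x))
  refine ⟨y, hyr, _, neg_mem_frechetNC_of_isLocalMinOn hyS.1 hloc hf, ?_⟩
  calc ‖-(ρ⁻¹ • (2 • (innerSL ℝ (T y - T x)).comp (T : Z →L[ℝ] F)) - p) - p‖
      = ρ⁻¹ * (2 * ‖(innerSL ℝ (T y - T x)).comp (T : Z →L[ℝ] F)‖) := by
        rw [neg_sub, sub_sub_cancel_left, norm_neg, norm_smul, RCLike.norm_nsmul ℝ, nsmul_eq_mul,
          Real.norm_of_nonneg (inv_nonneg.mpr hρ.le), Nat.cast_ofNat]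
    _ ≤ ρ⁻¹ * (2 * (‖T (y - x)‖ * ‖(T : Z →L[ℝ] F)‖)) := by
        grw [ContinuousLinearMap.opNorm_comp_le, innerSL_apply_norm, map_sub]
    _ ≤ ρ⁻¹ * (2 * (ρ * ε * K * ‖(T : Z →L[ℝ] F)‖)) := by gcongr
    _ = 2 * ‖(T : Z →L[ℝ] F)‖ * K * ε := by field_simp

theorem exists_frechetNC_near_of_mem_epsNC [FiniteDimensional ℝ Z] :
    ∃ C, ∀ {A : Set Z} {x : Z} {p : Z →L[ℝ] ℝ} {ε r : ℝ}, 0 < ε → 0 < r →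
      IsClosed (A ∩ closedBall x r) → p ∈ epsNC A x ε →
      ∃ y, dist y x < r ∧ ∃ q ∈ frechetNC A y, ‖q - p‖ ≤ C * ε := by
  let T := toEuclidean (E := Z)
  refine ⟨2 * ‖T.toContinuousLinearMap‖ * ‖T.symm.toContinuousLinearMap‖,
    fun {A x p ε r} hε hr hA ⟨hx, hp⟩ ↦ ?_⟩
  obtain ⟨s, hs, hsp⟩ := nhds_basis_closedBall.eventually_iff.mp hp
  obtain ⟨y, hy, q, hq, hqp⟩ := exists_frechetNC_near_of_forall_le T hx hε
    (lt_min hs hr) (isClosed_inter_closedBall_of_le hA (by simp))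
    fun y ⟨hyA, hy⟩ ↦ hsp (closedBall_subset_closedBall (min_le_left _ _) hy) hyA
  exact ⟨y, hy.trans_le (min_le_right _ _), q, hq, hqp⟩

lemma mem_limitingNC_of_forall_exists {A : Set Z} {x : Z} {p : Z →L[ℝ] ℝ}
    (h : ∀ δ > 0, ∃ y, dist y x < δ ∧ ∃ q ∈ frechetNC A y, dist q p < δ) :
    p ∈ limitingNC A x := by
  have hcl : (x, p) ∈ closure {yq : Z × (Z →L[ℝ] ℝ) | yq.2 ∈ frechetNC A yq.1} :=
    Metric.mem_closure_iff.mpr fun δ hδ ↦ by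
      obtain ⟨y, hy, q, hq, hqp⟩ := h δ hδ
      exact ⟨(y, q), hq, by rw [Prod.dist_eq, dist_comm x, dist_comm p]; exact max_lt hy hqp⟩
  obtain ⟨s, hs, hlim⟩ := mem_closure_iff_seq_limit.mp hcl
  exact ⟨_, _, (continuous_fst.tendsto _).comp hlim, (continuous_snd.tendsto _).comp hlim, hs⟩

theorem mem_limitingNC_of_tendsto_epsNC [FiniteDimensional ℝ Z] {A : Set Z} {x : Z}
    {p : Z →L[ℝ] ℝ} {xs : ℕ → Z} {ps : ℕ → Z →L[ℝ] ℝ}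
    (hA : ∃ r > 0, IsClosed (A ∩ closedBall x r)) (hxs : Tendsto xs atTop (𝓝 x))
    (hps : Tendsto ps atTop (𝓝 p)) (hε : ∀ ε > 0, ∀ᶠ i in atTop, ps i ∈ epsNC A (xs i) ε) :
    p ∈ limitingNC A x := by
  obtain ⟨r, hr, hA⟩ := hA
  obtain ⟨C, hC⟩ := exists_frechetNC_near_of_mem_epsNC (Z := Z)
  refine mem_limitingNC_of_forall_exists fun δ hδ ↦ ?_
  obtain ⟨ε, hε0, hεδ⟩ := exists_pos_mul_lt (half_pos hδ) C
  set s := min (r / 2) (δ / 2)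
  have hs : 0 < s := by positivity
  obtain ⟨i, hxi, hpi, hi⟩ := ((hxs.eventually (ball_mem_nhds x hs)).and
    ((hps.eventually (ball_mem_nhds p (half_pos hδ))).and (hε ε hε0))).exists
  obtain ⟨y, hy, q, hq, hqp⟩ := hC hε0 hs (isClosed_inter_closedBall_of_le hA
    (by linarith [min_le_left (r / 2) (δ / 2)])) hi
  refine ⟨y, ?_, q, hq, ?_⟩
  · linarith [dist_triangle y (xs i) x, min_le_right (r / 2) (δ / 2)]
  · rw [← dist_eq_norm] at hqp
    linarith [dist_triangle q (ps i) p]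

lemma HasStrictFDerivAt.eventually_eventually_norm_sub_le {f : Z → W} {L : Z →L[ℝ] W} {z : Z}
    (hf : HasStrictFDerivAt f L z) {η : ℝ} (hη : 0 < η) :
    ∀ᶠ b in 𝓝 z, ∀ᶠ a in 𝓝 b, ‖f a - f b - L (a - b)‖ ≤ η * ‖a - b‖ := by
  have hdiag : Tendsto (fun b ↦ (b, b)) (𝓝 z) (𝓝 (z, z)) :=
    (continuous_id.prodMk continuous_id).tendsto z
  filter_upwards [hdiag.eventually (hf.isLittleO.def hη).eventually_nhds] with b hb
  rw [nhds_prod_eq] at hb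
  exact hb.curry.mono fun a ha ↦ ha.self_of_nhds

theorem comp_mem_epsNC [FiniteDimensional ℝ W] {A : Set Z} {B : Set W} {Ψ : Z → W}
    {L : Z →L[ℝ] W} {w : Z} {q : W →L[ℝ] ℝ} {η : ℝ} (hη : 0 < η) (hw : w ∈ A)
    (hAB : MapsTo Ψ A B) (hq : q ∈ frechetNC B (Ψ w))
    (hΨ : ∀ᶠ a in 𝓝 w, ‖Ψ a - Ψ w - L (a - w)‖ ≤ η * ‖a - w‖) :
    q.comp L ∈ epsNC A w (η * (‖L‖ + η + ‖q‖)) := by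
  have hlip : ∀ᶠ a in 𝓝 w, ‖Ψ a - Ψ w‖ ≤ (‖L‖ + η) * ‖a - w‖ := hΨ.mono fun a ha ↦ by
    linarith [norm_le_insert' (Ψ a - Ψ w) (L (a - w)), L.le_opNorm (a - w)]
  have hcont : Tendsto Ψ (𝓝 w) (𝓝 (Ψ w)) := by
    refine tendsto_iff_norm_sub_tendsto_zero.mpr (squeeze_zero' (.of_forall fun _ ↦ norm_nonneg _)
      hlip ?_)
    simpa using (((tendsto_id (x := 𝓝 w)).sub_const w).norm).const_mul (‖L‖ + η)
  refine ⟨hw, ?_⟩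
  filter_upwards [hcont.eventually (frechetNC_subset_epsNC hη hq).2, hΨ, hlip]
    with a hnormal happrox hlipa haA
  calc q (L (a - w)) = q (Ψ a - Ψ w) - q (Ψ a - Ψ w - L (a - w)) := by
        rw [← map_sub, _root_.sub_sub_cancel]
    _ ≤ η * ‖Ψ a - Ψ w‖ + ‖q‖ * (η * ‖a - w‖) := by
        have hq' : |q (Ψ a - Ψ w - L (a - w))| ≤ ‖q‖ * (η * ‖a - w‖) :=
          (q.le_opNorm _).trans (by gcongr)
        linarith [hnormal (hAB haA), neg_abs_le (q (Ψ a - Ψ w - L (a - w)))]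
    _ ≤ η * ((‖L‖ + η) * ‖a - w‖) + ‖q‖ * (η * ‖a - w‖) := by gcongr
    _ = η * (‖L‖ + η + ‖q‖) * ‖a - w‖ := by ring

theorem comp_mem_limitingNC_of_equiv [FiniteDimensional ℝ Z] [FiniteDimensional ℝ W]
    {A : Set Z} {z : Z} (hA : ∃ r > 0, IsClosed (A ∩ closedBall z r)) (e : W ≃ Z) {w : W}
    (hwz : e w = z) {L : Z →L[ℝ] W} (he : ContinuousAt e w) (hL : HasStrictFDerivAt e.symm L z)
    {p : W →L[ℝ] ℝ} (hp : p ∈ limitingNC (e ⁻¹' A) w) :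
    p.comp L ∈ limitingNC A z := by
  obtain ⟨xs, ps, hxs, hps, hfr⟩ := hp
  have hws : Tendsto (fun i ↦ e (xs i)) atTop (𝓝 z) := hwz ▸ he.tendsto.comp hxs
  refine mem_limitingNC_of_tendsto_epsNC hA hws
    ((((ContinuousLinearMap.compL ℝ Z W ℝ).flip L).continuous.tendsto p).comp hps) fun δ hδ ↦ ?_
  set η := min 1 (δ / (‖L‖ + ‖p‖ + 2))
  have hη : 0 < η := by positivity
  have hηδ : η * (‖L‖ + η + (‖p‖ + 1)) ≤ δ :=
    calc η * (‖L‖ + η + (‖p‖ + 1)) ≤ η * (‖L‖ + ‖p‖ + 2) :=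
          mul_le_mul_of_nonneg_left (by linarith [min_le_left 1 (δ / (‖L‖ + ‖p‖ + 2))]) hη.le
      _ ≤ δ / (‖L‖ + ‖p‖ + 2) * (‖L‖ + ‖p‖ + 2) := by gcongr; exact min_le_right _ _
      _ = δ := div_mul_cancel₀ _ (by positivity)
  filter_upwards [hws.eventually (hL.eventually_eventually_norm_sub_le hη),
    hps.norm.eventually (gt_mem_nhds (lt_add_one ‖p‖))] with i hi hpi
  refine epsNC_mono ?_ (comp_mem_epsNC (Ψ := e.symm) (B := e ⁻¹' A) hη (hfr i).1
    (fun a ha ↦ by simpa using ha) (by rw [e.symm_apply_apply]; exact hfr i) hi)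
  exact le_trans (by gcongr) hηδ

end NormalCones

def graphShift {α β : Type*} [AddGroup β] (h : α → β) : α × β ≃ α × β :=
  (Equiv.refl α).prodShear fun x ↦ Equiv.subRight (h x)

@[simp]
lemma graphShift_apply {α β : Type*} [AddGroup β] (h : α → β) (w : α × β) :
    graphShift h w = (w.1, w.2 - h w.1) :=
  rfl

@[simp]
lemma graphShift_symm_apply {α β : Type*} [AddGroup β] (h : α → β) (w : α × β) :
    (graphShift h).symm w = (w.1, w.2 + h w.1) :=
  rfl

lemma sumGraph_eq_preimage_graphShift {α β : Type*} [NormedAddCommGroup β] (G : Set (α × β))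
    (h : α → β) : sumGraph G h = graphShift h ⁻¹' G :=
  rfl

def shear (D : E →L[ℝ] Y) : E × Y →L[ℝ] E × Y :=
  (ContinuousLinearMap.fst ℝ E Y).prod
    (ContinuousLinearMap.snd ℝ E Y + D.comp (ContinuousLinearMap.fst ℝ E Y))

lemma shear_comp_shear_neg (D : E →L[ℝ] Y) :
    (shear D).comp (shear (-D)) = ContinuousLinearMap.id ℝ (E × Y) :=
  ContinuousLinearMap.ext fun w ↦ by simp [shear]

lemma pairFun_eq_comp_shear (p : E × Y →L[ℝ] ℝ) (D : E →L[ℝ] Y) :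
    pairFun (p.comp (ContinuousLinearMap.inl ℝ E Y) +
        (p.comp (ContinuousLinearMap.inr ℝ E Y)).comp D) (p.comp (ContinuousLinearMap.inr ℝ E Y)) =
      p.comp (shear D) := by
  refine ContinuousLinearMap.ext fun w ↦ ?_
  simp only [pairFun, shear, ContinuousLinearMap.coprod_apply, add_apply,
    ContinuousLinearMap.comp_apply, ContinuousLinearMap.inl_apply, ContinuousLinearMap.inr_apply,
    ContinuousLinearMap.prod_apply, ContinuousLinearMap.coe_fst', ContinuousLinearMap.coe_snd',
    ← map_add, Prod.mk_add_mk, add_zero, zero_add, add_comm (D w.1)]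

lemma HasStrictFDerivAt.shear {g : E → Y} {D : E →L[ℝ] Y} {w : E × Y}
    (hg : HasStrictFDerivAt g D w.1) :
    HasStrictFDerivAt (fun w : E × Y ↦ (w.1, w.2 + g w.1)) (shear D) w :=
  hasStrictFDerivAt_fst.prodMk (hasStrictFDerivAt_snd.add (hg.comp w hasStrictFDerivAt_fst))

lemma hasStrictFDerivAt_graphShift_symm {h : E → Y} {D : E →L[ℝ] Y} {w : E × Y}
    (hh : HasStrictFDerivAt h D w.1) : HasStrictFDerivAt (graphShift h).symm (shear D) w :=
  hh.shear

lemma hasStrictFDerivAt_graphShift {h : E → Y} {D : E →L[ℝ] Y} {w : E × Y}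
    (hh : HasStrictFDerivAt h D w.1) : HasStrictFDerivAt (graphShift h) (shear (-D)) w := by
  have : ⇑(graphShift h) = fun w ↦ (w.1, w.2 + (fun x ↦ -h x) w.1) :=
    funext fun w ↦ by simp [sub_eq_add_neg]
  rw [this]
  exact hh.neg.shear

lemma exists_isClosed_sumGraph_inter_closedBall {α β : Type*} [NormedAddCommGroup α]
    [NormedAddCommGroup β] {G : Set (α × β)} (hG : IsClosed G) {h : α → β} {u : α}
    (hlip : LipschitzAround h u) (v : β) :
    ∃ r > 0, IsClosed (sumGraph G h ∩ closedBall (u, v) r) := by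
  obtain ⟨K, U, hU, hK⟩ := hlip
  obtain ⟨r, hr, hrU⟩ := nhds_basis_closedBall.mem_iff.mp hU
  refine ⟨r, hr, ?_⟩
  rw [← closedBall_prod_same, inter_comm]
  refine ContinuousOn.preimage_isClosed_of_isClosed ?_
    (isClosed_closedBall.prod isClosed_closedBall) hG
  exact continuousOn_fst.prodMk (continuousOn_snd.sub
    ((hK.continuousOn.mono hrU).comp continuousOn_fst fun w hw ↦ hw.1))

theorem statement7_general [FiniteDimensional ℝ E] [FiniteDimensional ℝ Y]
    (G : Set (E × Y)) (hG : IsClosed G) (h : E → Y) (u : E) (v : Y)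
    (hlip : LipschitzAround h u) (Dh : E →L[ℝ] Y)
    (hDh : HasStrictFDerivAt h Dh u) :
    limitingNC (sumGraph G h) (u, v) =
      {p : (E × Y) →L[ℝ] ℝ |
        pairFun (p.comp (ContinuousLinearMap.inl ℝ E Y) +
            (p.comp (ContinuousLinearMap.inr ℝ E Y)).comp Dh)
          (p.comp (ContinuousLinearMap.inr ℝ E Y)) ∈
        limitingNC G (u, v - h u)} := by
  ext p
  rw [mem_ofPred_eq, pairFun_eq_comp_shear]
  constructor
  · exact comp_mem_limitingNC_of_equiv ⟨1, one_pos, hG.inter isClosed_closedBall⟩ (graphShift h)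
      rfl (hasStrictFDerivAt_graphShift hDh).continuousAt (hasStrictFDerivAt_graphShift_symm hDh)
  · intro hp
    have hGh : (graphShift h).symm ⁻¹' sumGraph G h = G := Equiv.symm_preimage_preimage _ _
    have := comp_mem_limitingNC_of_equiv (exists_isClosed_sumGraph_inter_closedBall hG hlip v)
      (graphShift h).symm (by simp) (hasStrictFDerivAt_graphShift_symm hDh).continuousAt
      (hasStrictFDerivAt_graphShift hDh) (hGh ▸ hp)
    rwa [ContinuousLinearMap.comp_assoc, shear_comp_shear_neg, ContinuousLinearMap.comp_id] at this

/-- for `h` strictly differentiable at `u`, the limiting normal cone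
to the graph of `h + F` is exactly described via `∇h(u)ᵀ`. -/
theorem statement7 [FiniteDimensional ℝ E] [FiniteDimensional ℝ Y]
    (G : Set (E × Y)) (hG : IsClosed G) (h : E → Y) (u : E) (v : Y)
    (hlip : LipschitzAround h u) (Dh : E →L[ℝ] Y)
    (hDh : HasStrictFDerivAt h Dh u) (huv : (u, v) ∈ sumGraph G h) :
    limitingNC (sumGraph G h) (u, v) =
      {p : (E × Y) →L[ℝ] ℝ |
        pairFun (p.comp (ContinuousLinearMap.inl ℝ E Y) +
            (p.comp (ContinuousLinearMap.inr ℝ E Y)).comp Dh)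
          (p.comp (ContinuousLinearMap.inr ℝ E Y)) ∈
        limitingNC G (u, v - h u)} :=
  statement7_general G hG h u v hlip Dh hDh

end
end

section
/- Let u, u* ∈ ℝⁿ and v, v* ∈ ℝᵐ (Euclidean spaces) satisfy ⟨u*,u⟩ = ⟨v*,v⟩ and ‖u‖₂ = ‖v*‖₂ = 1. Then the m×n matrix B̄ := v* u*ᵀ + v uᵀ − ⟨u*,u⟩ v* uᵀ satisfies B̄ u = v, B̄ᵀ v* = u*, and ‖B̄‖_F² = ‖u*‖₂² + ‖v‖₂² − ⟨u*,u⟩², where ‖·‖_F denotes the Frobenius norm. -/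
open Matrix

noncomputable section

/-- The Euclidean norm on `Fin k → ℝ`. -/
def euclN {k : ℕ} (x : Fin k → ℝ) : ℝ := Real.sqrt (x ⬝ᵥ x)

/-- The Frobenius norm of a real matrix. -/
def frobNorm {m n : ℕ} (B : Matrix (Fin m) (Fin n) ℝ) : ℝ :=
  Real.sqrt (∑ i, ∑ j, (B i j) ^ 2)

/-- The matrix `B̄ := v* u*ᵀ + v uᵀ − ⟨u*,u⟩ v* uᵀ`. -/
def Bbar {m n : ℕ} (u us : Fin n → ℝ) (v vs : Fin m → ℝ) : Matrix (Fin m) (Fin n) ℝ :=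
  Matrix.vecMulVec vs us + Matrix.vecMulVec v u - (us ⬝ᵥ u) • Matrix.vecMulVec vs u

/-
B̄ = v* wᵀ + v uᵀ with w := u* − ⟨u*,u⟩ u, and w ⊥ u because ‖u‖ = 1. Hence B̄ u = v and
B̄ᵀ v* = w + ⟨v,v*⟩ u = u*. Expanding the Frobenius norm of a sum of two rank-one matrices,
the cross term carries the factor ⟨w,u⟩ = 0, so
‖B̄‖_F² = ‖w‖² ‖v*‖² + ‖v‖² ‖u‖² = ‖u*‖² − ⟨u*,u⟩² + ‖v‖².
-/

lemma euclN_sq {k : ℕ} (x : Fin k → ℝ) : euclN x ^ 2 = x ⬝ᵥ x :=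
  Real.sq_sqrt (Finset.sum_nonneg fun _ _ => mul_self_nonneg _)

lemma frobNorm_sq {m n : ℕ} (B : Matrix (Fin m) (Fin n) ℝ) :
    frobNorm B ^ 2 = ∑ i, ∑ j, B i j ^ 2 :=
  Real.sq_sqrt (Finset.sum_nonneg fun _ _ => Finset.sum_nonneg fun _ _ => sq_nonneg _)

lemma sum_sum_sq_vecMulVec_add_vecMulVec {ι κ R : Type*} [Fintype ι] [Fintype κ] [CommSemiring R]
    (a b : ι → R) (c d : κ → R) :
    ∑ i, ∑ j, (vecMulVec a c + vecMulVec b d) i j ^ 2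
      = (a ⬝ᵥ a) * (c ⬝ᵥ c) + 2 * (a ⬝ᵥ b) * (c ⬝ᵥ d) + (b ⬝ᵥ b) * (d ⬝ᵥ d) := by
  calc ∑ i, ∑ j, (vecMulVec a c + vecMulVec b d) i j ^ 2
      = ∑ i, ∑ j, (a i * a i * (c j * c j) + 2 * (a i * b i) * (c j * d j)
          + b i * b i * (d j * d j)) := by
        simp only [Matrix.add_apply, vecMulVec_apply]
        exact Finset.sum_congr rfl fun i _ => Finset.sum_congr rfl fun j _ => by ring
    _ = _ := by
        simp only [Finset.sum_add_distrib, ← Finset.mul_sum, ← Finset.sum_mul, dotProduct]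

lemma Bbar_eq_vecMulVec_add_vecMulVec {m n : ℕ} (u us : Fin n → ℝ) (v vs : Fin m → ℝ) :
    Bbar u us v vs = vecMulVec vs (us - (us ⬝ᵥ u) • u) + vecMulVec v u := by
  ext i j
  simp only [Bbar, Matrix.add_apply, Matrix.sub_apply, Matrix.smul_apply, vecMulVec_apply,
    Pi.sub_apply, Pi.smul_apply, smul_eq_mul]
  ring

/-- `B̄ u = v`, `B̄ᵀ v* = u*` and
`‖B̄‖_F² = ‖u*‖₂² + ‖v‖₂² − ⟨u*,u⟩²`. -/
theorem statement12 {m n : ℕ} (u us : Fin n → ℝ) (v vs : Fin m → ℝ)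
    (hc : us ⬝ᵥ u = vs ⬝ᵥ v) (hu : euclN u = 1) (hvs : euclN vs = 1) :
    (Bbar u us v vs).mulVec u = v ∧
    (Bbar u us v vs).transpose.mulVec vs = us ∧
    frobNorm (Bbar u us v vs) ^ 2 = euclN us ^ 2 + euclN v ^ 2 - (us ⬝ᵥ u) ^ 2 := by
  have huu : u ⬝ᵥ u = 1 := by rw [← euclN_sq, hu, one_pow]
  have hvv : vs ⬝ᵥ vs = 1 := by rw [← euclN_sq, hvs, one_pow]
  rw [Bbar_eq_vecMulVec_add_vecMulVec]
  set c := us ⬝ᵥ u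
  set w := us - c • u
  have hwu : w ⬝ᵥ u = 0 := by
    simp only [w, sub_dotProduct, smul_dotProduct, huu, smul_eq_mul, mul_one, c, sub_self]
  have hww : w ⬝ᵥ w = us ⬝ᵥ us - c ^ 2 := by
    simp only [w, sub_dotProduct, dotProduct_sub, smul_dotProduct, dotProduct_smul, huu,
      dotProduct_comm u us, smul_eq_mul]
    ring
  refine ⟨?_, ?_, ?_⟩
  · simp only [add_mulVec, vecMulVec_mulVec, hwu, huu, op_smul_eq_smul, zero_smul, one_smul,
      zero_add]
  · simp only [transpose_add, transpose_vecMulVec, add_mulVec, vecMulVec_mulVec, hvv,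
      dotProduct_comm v vs, ← hc, op_smul_eq_smul, one_smul]
    exact sub_add_cancel us (c • u)
  · rw [frobNorm_sq, sum_sum_sq_vecMulVec_add_vecMulVec, hwu, hvv, huu, hww, euclN_sq,
      euclN_sq]
    ring

end
end

section
/- Let u, u* ∈ ℝⁿ and v, v* ∈ ℝᵐ (Euclidean spaces) satisfy ⟨u*,u⟩ = ⟨v*,v⟩ and ‖u‖₂ = ‖v*‖₂ = 1, and set B̄ := v* u*ᵀ + v uᵀ − ⟨u*,u⟩ v* uᵀ. Then B̄ is the unique minimizer of ½‖B‖_F² over all m×n matrices B satisfying B u = v and Bᵀ v* = u*; that is, every m×n matrix B with B u = v and Bᵀ v* = u* satisfies ‖B‖_F ≥ ‖B̄‖_F, with equality only if B = B̄. -/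
open Matrix

noncomputable section

/-!
Since `B̄` itself satisfies both constraints, `D := B - B̄` satisfies `D u = 0` and `Dᵀ v* = 0`.
As `⟨a bᵀ, D⟩_F = ⟨a, D b⟩`, each of the three rank-one terms of `B̄` is Frobenius-orthogonal
to `D` (the term `v* u*ᵀ` through `⟨v*, D u*⟩ = ⟨Dᵀ v*, u*⟩`), so
`‖B‖_F² = ‖B̄‖_F² + ‖D‖_F²` by Pythagoras.
-/

section FrobeniusInner

variable {ι κ R : Type*} [Fintype ι] [Fintype κ] [CommRing R]

def frobInner (A D : Matrix ι κ R) : R := ∑ i, ∑ j, A i j * D i j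

theorem frobInner_add_left (A A' D : Matrix ι κ R) :
    frobInner (A + A') D = frobInner A D + frobInner A' D := by
  simp only [frobInner, Matrix.add_apply, add_mul, Finset.sum_add_distrib]

theorem frobInner_sub_left (A A' D : Matrix ι κ R) :
    frobInner (A - A') D = frobInner A D - frobInner A' D := by
  simp only [frobInner, Matrix.sub_apply, sub_mul, Finset.sum_sub_distrib]

theorem frobInner_smul_left (c : R) (A D : Matrix ι κ R) :
    frobInner (c • A) D = c * frobInner A D := by
  simp only [frobInner, Matrix.smul_apply, smul_eq_mul, mul_assoc, Finset.mul_sum]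

theorem frobInner_vecMulVec (a : ι → R) (b : κ → R) (D : Matrix ι κ R) :
    frobInner (vecMulVec a b) D = a ⬝ᵥ (D *ᵥ b) := by
  simp only [frobInner, vecMulVec_apply, dotProduct, mulVec, Finset.mul_sum]
  exact Finset.sum_congr rfl fun i _ => Finset.sum_congr rfl fun j _ => by ring

theorem frobInner_add_self_of_frobInner_eq_zero {A D : Matrix ι κ R}
    (h : frobInner A D = 0) :
    frobInner (A + D) (A + D) = frobInner A A + frobInner D D := by
  have hAD : frobInner (A + D) (A + D) =
      frobInner A A + 2 * frobInner A D + frobInner D D := by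
    simp only [frobInner, Matrix.add_apply, Finset.mul_sum, ← Finset.sum_add_distrib]
    exact Finset.sum_congr rfl fun i _ => Finset.sum_congr rfl fun j _ => by ring
  rw [hAD, h, mul_zero, add_zero]

theorem frobInner_self_nonneg (A : Matrix ι κ ℝ) : 0 ≤ frobInner A A :=
  Finset.sum_nonneg fun i _ => Finset.sum_nonneg fun j _ => mul_self_nonneg (A i j)

theorem eq_zero_of_frobInner_self_eq_zero {A : Matrix ι κ ℝ} (h : frobInner A A = 0) : A = 0 := by
  ext i j
  have hi := (Finset.sum_eq_zero_iff_of_nonneg fun i _ =>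
    Finset.sum_nonneg fun j _ => mul_self_nonneg (A i j)).mp h i (Finset.mem_univ i)
  exact mul_self_eq_zero.mp <|
    (Finset.sum_eq_zero_iff_of_nonneg fun j _ => mul_self_nonneg (A i j)).mp hi j
      (Finset.mem_univ j)

end FrobeniusInner

theorem frobNorm_eq_sqrt_frobInner {m n : ℕ} (B : Matrix (Fin m) (Fin n) ℝ) :
    frobNorm B = Real.sqrt (frobInner B B) := by
  simp only [frobNorm, frobInner, sq]

section Bbar

variable {m n : ℕ} {u us : Fin n → ℝ} {v vs : Fin m → ℝ}

theorem Bbar_mulVec (hu : u ⬝ᵥ u = 1) : Bbar u us v vs *ᵥ u = v := by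
  ext i
  simp [Bbar, add_mulVec, sub_mulVec, smul_mulVec, vecMulVec_mulVec, hu]

theorem transpose_Bbar_mulVec (hc : us ⬝ᵥ u = vs ⬝ᵥ v) (hvs : vs ⬝ᵥ vs = 1) :
    (Bbar u us v vs)ᵀ *ᵥ vs = us := by
  ext j
  simp [Bbar, add_mulVec, sub_mulVec, smul_mulVec, vecMulVec_mulVec, hvs, hc, dotProduct_comm v]

theorem frobInner_Bbar_eq_zero {D : Matrix (Fin m) (Fin n) ℝ}
    (hDu : D *ᵥ u = 0) (hDvs : Dᵀ *ᵥ vs = 0) : frobInner (Bbar u us v vs) D = 0 := by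
  rw [Bbar, frobInner_sub_left, frobInner_add_left, frobInner_smul_left, frobInner_vecMulVec,
    frobInner_vecMulVec, frobInner_vecMulVec, dotProduct_mulVec, ← mulVec_transpose, hDvs, hDu]
  simp

end Bbar

/-- `B̄` is the unique minimizer of `½‖B‖_F²` subject to `Bu = v`
and `Bᵀv* = u*`: any feasible `B` satisfies `‖B‖_F ≥ ‖B̄‖_F`, with equality only
if `B = B̄`. -/
theorem statement13 {m n : ℕ} (u us : Fin n → ℝ) (v vs : Fin m → ℝ)
    (hc : us ⬝ᵥ u = vs ⬝ᵥ v) (hu : euclN u = 1) (hvs : euclN vs = 1)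
    (B : Matrix (Fin m) (Fin n) ℝ)
    (hBu : B.mulVec u = v) (hBt : B.transpose.mulVec vs = us) :
    frobNorm (Bbar u us v vs) ≤ frobNorm B ∧
    (frobNorm B = frobNorm (Bbar u us v vs) → B = Bbar u us v vs) := by
  set D := B - Bbar u us v vs
  have hDu : D *ᵥ u = 0 := by
    rw [sub_mulVec, hBu, Bbar_mulVec (Real.sqrt_eq_one.mp hu), sub_self]
  have hDvs : Dᵀ *ᵥ vs = 0 := by
    rw [transpose_sub, sub_mulVec, hBt, transpose_Bbar_mulVec hc (Real.sqrt_eq_one.mp hvs),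
      sub_self]
  have horth : frobInner (Bbar u us v vs) D = 0 := frobInner_Bbar_eq_zero hDu hDvs
  have hpyth : frobInner B B = frobInner (Bbar u us v vs) (Bbar u us v vs) + frobInner D D := by
    simpa only [D, add_sub_cancel] using frobInner_add_self_of_frobInner_eq_zero horth
  rw [frobNorm_eq_sqrt_frobInner, frobNorm_eq_sqrt_frobInner]
  refine ⟨Real.sqrt_le_sqrt (by linarith [frobInner_self_nonneg D]), fun heq => ?_⟩
  have hD : frobInner D D = 0 := by
    have := Real.sqrt_inj (frobInner_self_nonneg B) (frobInner_self_nonneg _) |>.mp heq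
    linarith
  exact sub_eq_zero.mp (eq_zero_of_frobInner_self_eq_zero hD)

end
end

section
/- Let F: ℝⁿ ⇉ ℝᵐ have closed graph and (x̄,ȳ) ∈ gph F, with both ℝⁿ and ℝᵐ equipped with the Euclidean norm. Then rg°[F](x̄,ȳ) ≤ rg†[F](x̄,ȳ) ≤ √2 · rg°[F](x̄,ȳ). -/
open Filter Topology Set ENNReal NNReal

noncomputable section

variable {E Y : Type*} [NormedAddCommGroup E] [NormedSpace ℝ E]
  [NormedAddCommGroup Y] [NormedSpace ℝ Y]

/-!
Both inequalities compare the two infima candidate by candidate. Given `B`, the pair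
`(v* ∘ B, B u)` is admissible for `rg†` and its value is at most `√2 ‖B‖`, since each of
`‖v* ∘ B‖` and `‖B u‖` is at most `‖B‖`. Conversely, given an admissible `(u*, v)` with
`⟨u*, u⟩ = ⟨v*, v⟩`, write `u* = ⟨a, ·⟩` and `v* = ⟨b, ·⟩` with `‖b‖ = 1`, let
`c := a - ⟨a, u⟩ u` be the component of `a` orthogonal to `u`, and take
`B x := ⟨u, x⟩ v + ⟨c, x⟩ b`. Then `v* ∘ B = u*`, `B u = v`, and splitting `x` along `u`
and Cauchy–Schwarz in `ℝ²` give `‖B‖² ≤ ‖v‖² + ‖c‖² = ‖u*‖² + ‖v‖² - ⟨u*, u⟩²`.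
-/

section InnerProductSpace

open RealInnerProductSpace

variable {H K : Type*} [NormedAddCommGroup H] [InnerProductSpace ℝ H]
  [NormedAddCommGroup K] [InnerProductSpace ℝ K]

theorem norm_sub_inner_smul_sq {u : H} (hu : ‖u‖ = 1) (a : H) :
    ‖a - ⟪a, u⟫ • u‖ ^ 2 = ‖a‖ ^ 2 - ⟪a, u⟫ ^ 2 := by
  rw [norm_sub_sq_real, real_inner_smul_right, norm_smul, hu, Real.norm_eq_abs]
  ring_nf
  rw [sq_abs]
  ring

theorem norm_smulRight_add_smulRight_le {u c : H} (hu : ‖u‖ = 1) (hcu : ⟪c, u⟫ = 0)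
    (v : K) {b : K} (hb : ‖b‖ = 1) :
    ‖(innerSL ℝ u).smulRight v + (innerSL ℝ c).smulRight b‖ ≤ √(‖v‖ ^ 2 + ‖c‖ ^ 2) := by
  refine ContinuousLinearMap.opNorm_le_bound _ (Real.sqrt_nonneg _) fun x => ?_
  set s := ⟪u, x⟫
  set y := x - s • u
  have hyu : ⟪y, u⟫ = 0 := by
    rw [inner_sub_left, real_inner_smul_left, real_inner_self_eq_norm_sq, hu,
      real_inner_comm]
    ring
  have hx : x = s • u + y := by simp [y]
  have hcx : ⟪c, x⟫ = ⟪c, y⟫ := by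
    rw [hx, inner_add_right, real_inner_smul_right, hcu, mul_zero, zero_add]
  have hx_sq : ‖x‖ ^ 2 = s ^ 2 + ‖y‖ ^ 2 := by
    have hpy := norm_add_sq_eq_norm_sq_add_norm_sq_real
      (x := s • u) (y := y) (by rw [real_inner_smul_left, real_inner_comm, hyu, mul_zero])
    rw [← hx, norm_smul, hu, Real.norm_eq_abs, mul_one] at hpy
    rw [sq, hpy, abs_mul_abs_self, sq, sq]
  have hBx : ‖s • v + ⟪c, x⟫ • b‖ ≤ |s| * ‖v‖ + ‖c‖ * ‖y‖ := by
    calc ‖s • v + ⟪c, x⟫ • b‖ ≤ |s| * ‖v‖ + |⟪c, y⟫| := by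
          simpa [norm_smul, hb, hcx] using norm_add_le (s • v) (⟪c, x⟫ • b)
      _ ≤ |s| * ‖v‖ + ‖c‖ * ‖y‖ := by gcongr; exact abs_real_inner_le_norm c y
  have hcs : (|s| * ‖v‖ + ‖c‖ * ‖y‖) ^ 2 ≤ ((‖v‖ ^ 2 + ‖c‖ ^ 2) * ‖x‖ ^ 2) := by
    rw [hx_sq, ← sq_abs s]
    nlinarith [sq_nonneg (|s| * ‖c‖ - ‖v‖ * ‖y‖)]
  calc ‖((innerSL ℝ u).smulRight v + (innerSL ℝ c).smulRight b) x‖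
      = ‖s • v + ⟪c, x⟫ • b‖ := by simp [s]
    _ ≤ √((‖v‖ ^ 2 + ‖c‖ ^ 2) * ‖x‖ ^ 2) :=
        hBx.trans <| (Real.le_sqrt (by positivity) (by positivity)).2 hcs
    _ = √(‖v‖ ^ 2 + ‖c‖ ^ 2) * ‖x‖ := by
        rw [Real.sqrt_mul (by positivity), Real.sqrt_sq (norm_nonneg x)]

theorem exists_clm_comp_eq_apply_eq [CompleteSpace H] [CompleteSpace K] {u : H}
    {vs : K →L[ℝ] ℝ} (hu : ‖u‖ = 1) (hvs : ‖vs‖ = 1) {us : H →L[ℝ] ℝ} {v : K}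
    (h : us u = vs v) :
    ∃ B : H →L[ℝ] K, vs.comp B = us ∧ B u = v ∧
      ‖B‖ ≤ √(‖us‖ ^ 2 + ‖v‖ ^ 2 - us u ^ 2) := by
  set a := (InnerProductSpace.toDual ℝ H).symm us
  set b := (InnerProductSpace.toDual ℝ K).symm vs
  have ha : ∀ x, ⟪a, x⟫ = us x := fun _ => InnerProductSpace.toDual_symm_apply
  have hb : ‖b‖ = 1 := by simp [b, hvs]
  have hvsb : vs b = 1 := by
    rw [← InnerProductSpace.toDual_symm_apply, real_inner_self_eq_norm_sq, hb, one_pow]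
  set c := a - us u • u
  have huu : ⟪u, u⟫ = 1 := by rw [real_inner_self_eq_norm_sq, hu, one_pow]
  have hcu : ⟪c, u⟫ = 0 := by
    rw [inner_sub_left, real_inner_smul_left, ha, huu, mul_one, sub_self]
  have hc : ‖c‖ ^ 2 = ‖us‖ ^ 2 - us u ^ 2 := by
    simpa [ha, a] using norm_sub_inner_smul_sq hu a
  refine ⟨(innerSL ℝ u).smulRight v + (innerSL ℝ c).smulRight b, ?_, ?_, ?_⟩
  · ext x
    simp only [ContinuousLinearMap.comp_apply, add_apply,
      ContinuousLinearMap.smulRight_apply, innerSL_apply_apply, map_add, map_smul,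
      smul_eq_mul, hvsb, ← h, c, inner_sub_left, real_inner_smul_left, ha]
    ring
  · simp [hu, hcu]
  · convert norm_smulRight_add_smulRight_le hu hcu v hb using 2
    rw [hc]
    ring

end InnerProductSpace

theorem sqrt_norm_comp_sq_add_norm_apply_sq_sub_le {u : E} {vs : Y →L[ℝ] ℝ} (hu : ‖u‖ ≤ 1)
    (hvs : ‖vs‖ ≤ 1) (B : E →L[ℝ] Y) :
    √(‖vs.comp B‖ ^ 2 + ‖B u‖ ^ 2 - (vs.comp B) u ^ 2) ≤ √2 * ‖B‖ := by
  have hcomp : ‖vs.comp B‖ ≤ ‖B‖ :=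
    (vs.opNorm_comp_le B).trans (mul_le_of_le_one_left (norm_nonneg B) hvs)
  have happly : ‖B u‖ ≤ ‖B‖ :=
    (B.le_opNorm u).trans (mul_le_of_le_one_right (norm_nonneg B) hu)
  rw [← Real.sqrt_sq (norm_nonneg B), ← Real.sqrt_mul zero_le_two]
  apply Real.sqrt_le_sqrt
  nlinarith [sq_nonneg ((vs.comp B) u), norm_nonneg (vs.comp B), norm_nonneg (B u)]

theorem rgCirc_le_of_mem {G : Set (E × Y)} {z : E × Y} {u : E} {vs : Y →L[ℝ] ℝ}
    {B : E →L[ℝ] Y} (hu : ‖u‖ = 1) (hvs : ‖vs‖ = 1)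
    (hB : (vs.comp B, B u) ∈ pdDeriv G z u vs) :
    rgCirc G z ≤ ENNReal.ofReal ‖B‖ :=
  iInf_le_of_le u <| iInf_le_of_le vs <| iInf_le_of_le B <| iInf_le_of_le hu <|
    iInf_le_of_le hvs <| iInf_le _ hB

theorem rgDagger_le_of_mem {G : Set (E × Y)} {z : E × Y} {u : E} {vs : Y →L[ℝ] ℝ}
    {w : (E →L[ℝ] ℝ) × Y} (hu : ‖u‖ = 1) (hvs : ‖vs‖ = 1) (hw : w ∈ pdDeriv G z u vs)
    (h : w.1 u = vs w.2) :
    rgDagger G z ≤ ENNReal.ofReal √(‖w.1‖ ^ 2 + ‖w.2‖ ^ 2 - w.1 u ^ 2) :=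
  iInf_le_of_le u <| iInf_le_of_le vs <| iInf_le_of_le w <| iInf_le_of_le hu <|
    iInf_le_of_le hvs <| iInf_le_of_le hw <| iInf_le _ h

theorem rgDagger_le_sqrt_two_mul_rgCirc (G : Set (E × Y)) (z : E × Y) :
    rgDagger G z ≤ ENNReal.ofReal √2 * rgCirc G z := by
  have h0 : ENNReal.ofReal √2 ≠ 0 := by simp
  rw [mul_comm, ← ENNReal.div_le_iff_le_mul (Or.inl h0) (Or.inl ENNReal.ofReal_ne_top)]
  simp only [rgCirc, le_iInf_iff]
  intro u vs B hu hvs hB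
  refine ENNReal.div_le_of_le_mul' ?_
  rw [← ENNReal.ofReal_mul (Real.sqrt_nonneg 2)]
  exact (rgDagger_le_of_mem (w := (vs.comp B, B u)) hu hvs hB rfl).trans <|
    ENNReal.ofReal_le_ofReal <| sqrt_norm_comp_sq_add_norm_apply_sq_sub_le hu.le hvs.le B

theorem rgCirc_le_rgDagger {H K : Type*} [NormedAddCommGroup H] [InnerProductSpace ℝ H]
    [CompleteSpace H] [NormedAddCommGroup K] [InnerProductSpace ℝ K] [CompleteSpace K]
    (G : Set (H × K)) (z : H × K) : rgCirc G z ≤ rgDagger G z := by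
  simp only [rgDagger, le_iInf_iff]
  intro u vs w hu hvs hw h
  obtain ⟨B, hcomp, hBu, hB⟩ := exists_clm_comp_eq_apply_eq hu hvs h
  have hmem : (vs.comp B, B u) ∈ pdDeriv G z u vs := by rwa [hcomp, hBu]
  exact (rgCirc_le_of_mem hu hvs hmem).trans (ENNReal.ofReal_le_ofReal hB)

theorem statement14_general (n m : ℕ)
    (G : Set (EuclideanSpace ℝ (Fin n) × EuclideanSpace ℝ (Fin m)))
    (xb : EuclideanSpace ℝ (Fin n))
    (yb : EuclideanSpace ℝ (Fin m)) :
    rgCirc G (xb, yb) ≤ rgDagger G (xb, yb) ∧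
    rgDagger G (xb, yb) ≤ ENNReal.ofReal (Real.sqrt 2) * rgCirc G (xb, yb) :=
  ⟨rgCirc_le_rgDagger G _, rgDagger_le_sqrt_two_mul_rgCirc G _⟩

/-- in the Euclidean setting,
`rg°[F](xb,yb) ≤ rg†[F](xb,yb) ≤ √2 · rg°[F](xb,yb)`. -/
theorem statement14 (n m : ℕ)
    (G : Set (EuclideanSpace ℝ (Fin n) × EuclideanSpace ℝ (Fin m)))
    (hG : IsClosed G) (xb : EuclideanSpace ℝ (Fin n))
    (yb : EuclideanSpace ℝ (Fin m)) (hz : (xb, yb) ∈ G) :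
    rgCirc G (xb, yb) ≤ rgDagger G (xb, yb) ∧
    rgDagger G (xb, yb) ≤ ENNReal.ofReal (Real.sqrt 2) * rgCirc G (xb, yb) :=
  statement14_general n m G xb yb

end
end

section
/- Consider the constraint system x ∈ D, g(x) ∈ K, with associated mapping F(x) := K − g(x) for x ∈ D and F(x) := ∅ otherwise, where D ⊆ ℝⁿ and K ⊆ ℝᵐ are closed, g: ℝⁿ → ℝᵐ is continuously differentiable near x̄, x̄ ∈ D, g(x̄) ∈ K, and either D is directionally regular at x̄ or K is directionally regular at g(x̄). Then rg[F](x̄,0) = inf{ max(‖u*‖_*, ‖v‖) : u* + ∇g(x̄)ᵀv* ∈ N̄_D(x̄;u), −v* ∈ N̄_K(g(x̄); v + ∇g(x̄)u), ‖u‖ = ‖v*‖_* = 1 }. -/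
open Filter Topology Set ENNReal NNReal

noncomputable section

variable {E Y : Type*} [NormedAddCommGroup E] [NormedSpace ℝ E]
  [NormedAddCommGroup Y] [NormedSpace ℝ Y]

/-!
The constraint graph `G = {(x, y) | x ∈ D, g x + y ∈ K}` is the preimage of `D × K` under
`(x, y) ↦ (x, g x + y)`, a map whose derivative `(a, b) ↦ (a, ∇g(x) a + b)` is invertible.
Accordingly `(p, q)` is a Fréchet normal to `G` at `(x, y)` exactly when `p - q ∘ ∇g(x)` is
normal to `D` at `x` and `q` is normal to `K` at `g x + y`. Passing to directional limits along
`x̄ + tᵢ uᵢ`, with `∇g` continuous at `x̄`, turns a directional limiting normal to `G` into such a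
pair of directional limiting normals. Conversely, a pair of directional limiting normals to `D`
and to `K` can be recombined once both are realised along the same times `tᵢ`; directional
regularity of one of the two sets lets it follow the times of the other.
-/

def constraintGraph (D : Set E) (K : Set Y) (g : E → Y) : Set (E × Y) :=
  {p | p.1 ∈ D ∧ g p.1 + p.2 ∈ K}

theorem HasFDerivAt.tendsto_slope {g : E → Y} {x : E} {f : E →L[ℝ] Y}
    (hg : HasFDerivAt g f x) {t : ℕ → ℝ} {c : ℕ → E} {a : E} (ht0 : ∀ i, 0 < t i)
    (ht : Tendsto t atTop (𝓝 0)) (hc : Tendsto c atTop (𝓝 a)) :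
    Tendsto (fun i => (t i)⁻¹ • (g (x + t i • c i) - g x)) atTop (𝓝 (f a)) := by
  refine (hasFDerivWithinAt_univ.2 hg).lim (by simpa using ht.smul hc)
    (.of_forall fun _ => mem_univ _) (hc.congr fun i => ?_)
  rw [inv_smul_smul₀ (ht0 i).ne']

theorem Filter.Tendsto.clm_comp {α F G X : Type*} [NormedAddCommGroup F] [NormedSpace ℝ F]
    [NormedAddCommGroup G] [NormedSpace ℝ G] [NormedAddCommGroup X] [NormedSpace ℝ X]
    {l : Filter α} {p : α → F →L[ℝ] G} {p₀ : F →L[ℝ] G} {B : α → X →L[ℝ] F} {B₀ : X →L[ℝ] F}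
    (hp : Tendsto p l (𝓝 p₀)) (hB : Tendsto B l (𝓝 B₀)) :
    Tendsto (fun i => (p i).comp (B i)) l (𝓝 (p₀.comp B₀)) :=
  ((continuous_fst.clm_comp continuous_snd).tendsto (p₀, B₀)).comp (hp.prodMk_nhds hB)

theorem tendsto_pairFun {α : Type*} {l : Filter α} {p : α → E →L[ℝ] ℝ} {q : α → Y →L[ℝ] ℝ}
    {p₀ : E →L[ℝ] ℝ} {q₀ : Y →L[ℝ] ℝ} (hp : Tendsto p l (𝓝 p₀)) (hq : Tendsto q l (𝓝 q₀)) :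
    Tendsto (fun i => pairFun (p i) (q i)) l (𝓝 (pairFun p₀ q₀)) :=
  ((ContinuousLinearMap.coprodEquivL (S := ℝ)).continuous.tendsto (p₀, q₀)).comp
    (hp.prodMk_nhds hq)

theorem mem_dirLimitingNC_of_eventually {A : Set E} {x u : E} {p : E →L[ℝ] ℝ}
    {t : ℕ → ℝ} {us : ℕ → E} {ps : ℕ → E →L[ℝ] ℝ} (ht0 : ∀ i, 0 < t i)
    (ht : Tendsto t atTop (𝓝 0)) (hus : Tendsto us atTop (𝓝 u))
    (hps : Tendsto ps atTop (𝓝 p)) (hmem : ∀ᶠ i in atTop, ps i ∈ frechetNC A (x + t i • us i)) :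
    p ∈ dirLimitingNC A x u := by
  obtain ⟨N, hN⟩ := eventually_atTop.1 hmem
  exact ⟨fun i => t (i + N), fun i => us (i + N), fun i => ps (i + N), fun i => ht0 _,
    (tendsto_add_atTop_iff_nat N).2 ht, (tendsto_add_atTop_iff_nat N).2 hus,
    (tendsto_add_atTop_iff_nat N).2 hps, fun i => hN _ (Nat.le_add_left N i)⟩

theorem DirRegularAt.exists_seq {A : Set E} {x u : E} {p : E →L[ℝ] ℝ}
    (hA : DirRegularAt A x u) (hp : p ∈ dirLimitingNC A x u) {t : ℕ → ℝ}
    (ht0 : ∀ i, 0 < t i) (ht : Tendsto t atTop (𝓝 0)) :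
    ∃ (us : ℕ → E) (ps : ℕ → E →L[ℝ] ℝ), Tendsto us atTop (𝓝 u) ∧
      Tendsto ps atTop (𝓝 p) ∧ ∀ i, ps i ∈ frechetNC A (x + t i • us i) := by
  rw [hA] at hp
  exact hp t ht0 ht

section ConstraintGraph

variable {D : Set E} {K : Set Y} {g : E → Y} {x : E} {y : Y} {f : E →L[ℝ] Y}

@[simp] theorem pairFun_apply (p : E →L[ℝ] ℝ) (q : Y →L[ℝ] ℝ) (z : E × Y) :
    pairFun p q z = p z.1 + q z.2 := rfl

@[simp] theorem pairFun_comp_inl (p : E →L[ℝ] ℝ) (q : Y →L[ℝ] ℝ) :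
    (pairFun p q).comp (ContinuousLinearMap.inl ℝ E Y) = p := by
  ext; simp

@[simp] theorem pairFun_comp_inr (p : E →L[ℝ] ℝ) (q : Y →L[ℝ] ℝ) :
    (pairFun p q).comp (ContinuousLinearMap.inr ℝ E Y) = q := by
  ext; simp

theorem pairFun_comp_inl_comp_inr (r : E × Y →L[ℝ] ℝ) :
    pairFun (r.comp (ContinuousLinearMap.inl ℝ E Y)) (r.comp (ContinuousLinearMap.inr ℝ E Y)) =
      r :=
  ContinuousLinearMap.coprod_comp_inl_inr r

theorem tangentConeB_constraintGraph_subset (hg : HasFDerivAt g f x) {a : E} {b : Y}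
    (hab : (a, b) ∈ tangentConeB (constraintGraph D K g) (x, y)) :
    a ∈ tangentConeB D x ∧ f a + b ∈ tangentConeB K (g x + y) := by
  obtain ⟨t, c, ht0, ht, hc, hmem⟩ := hab
  have hc₁ : Tendsto (fun i => (c i).1) atTop (𝓝 a) := (continuous_fst.tendsto _).comp hc
  have hc₂ : Tendsto (fun i => (c i).2) atTop (𝓝 b) := (continuous_snd.tendsto _).comp hc
  refine ⟨⟨t, fun i => (c i).1, ht0, ht, hc₁, fun i => (hmem i).1⟩,
    ⟨t, fun i => (t i)⁻¹ • (g (x + t i • (c i).1) - g x) + (c i).2, ht0, ht,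
      (hg.tendsto_slope ht0 ht hc₁).add hc₂, fun i => ?_⟩⟩
  convert (hmem i).2 using 1
  simp only [Prod.fst_add, Prod.snd_add, Prod.smul_fst, Prod.smul_snd, smul_add,
    smul_inv_smul₀ (ht0 i).ne']
  abel

theorem mk_neg_mem_tangentConeB_constraintGraph (hg : HasFDerivAt g f x) (hy : g x + y ∈ K)
    {a : E} (ha : a ∈ tangentConeB D x) :
    (a, -f a) ∈ tangentConeB (constraintGraph D K g) (x, y) := by
  obtain ⟨t, c, ht0, ht, hc, hmem⟩ := ha
  refine ⟨t, fun i => (c i, -((t i)⁻¹ • (g (x + t i • c i) - g x))), ht0, ht,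
    hc.prodMk_nhds (hg.tendsto_slope ht0 ht hc).neg, fun i => ⟨hmem i, ?_⟩⟩
  convert hy using 1
  simp only [Prod.fst_add, Prod.snd_add, Prod.smul_fst, Prod.smul_snd, smul_neg,
    smul_inv_smul₀ (ht0 i).ne']
  abel

theorem zero_mk_mem_tangentConeB_constraintGraph (hx : x ∈ D) {b : Y}
    (hb : b ∈ tangentConeB K (g x + y)) :
    ((0 : E), b) ∈ tangentConeB (constraintGraph D K g) (x, y) := by
  obtain ⟨t, d, ht0, ht, hd, hmem⟩ := hb
  refine ⟨t, fun i => (0, d i), ht0, ht, tendsto_const_nhds.prodMk_nhds hd,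
    fun i => ⟨by simpa using hx, ?_⟩⟩
  simpa [add_assoc] using hmem i

theorem pairFun_mem_frechetNC_constraintGraph_iff (hg : HasFDerivAt g f x)
    {p : E →L[ℝ] ℝ} {q : Y →L[ℝ] ℝ} :
    pairFun p q ∈ frechetNC (constraintGraph D K g) (x, y) ↔
      p - q.comp f ∈ frechetNC D x ∧ q ∈ frechetNC K (g x + y) := by
  constructor
  · rintro ⟨⟨hx, hy⟩, hpq⟩
    refine ⟨⟨hx, fun a ha => ?_⟩, ⟨hy, fun b hb => ?_⟩⟩
    · have := hpq _ (mk_neg_mem_tangentConeB_constraintGraph hg hy ha)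
      simpa [sub_eq_add_neg] using this
    · simpa using hpq _ (zero_mk_mem_tangentConeB_constraintGraph hx hb)
  · rintro ⟨⟨hx, hpD⟩, ⟨hy, hqK⟩⟩
    refine ⟨⟨hx, hy⟩, fun ⟨a, b⟩ hab => ?_⟩
    obtain ⟨ha, hb⟩ := tangentConeB_constraintGraph_subset hg hab
    have h₁ := hpD a ha
    have h₂ := hqK _ hb
    simp only [_root_.sub_apply, ContinuousLinearMap.comp_apply] at h₁
    simp only [pairFun_apply, map_add] at h₂ ⊢
    linarith

end ConstraintGraph

section DirectionalNormals

variable {D : Set E} {K : Set Y} {g : E → Y} {xb : E} {yb : Y} {u : E} {v : Y}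
  {p : E →L[ℝ] ℝ} {q : Y →L[ℝ] ℝ}

theorem mem_dirLimitingNC_of_pairFun_mem_constraintGraph
    (hdiff : ∀ᶠ x in 𝓝 xb, DifferentiableAt ℝ g x) (hcont : ContinuousAt (fderiv ℝ g) xb)
    (h : pairFun p q ∈ dirLimitingNC (constraintGraph D K g) (xb, yb) (u, v)) :
    p - q.comp (fderiv ℝ g xb) ∈ dirLimitingNC D xb u ∧
      q ∈ dirLimitingNC K (g xb + yb) (v + fderiv ℝ g xb u) := by
  obtain ⟨t, c, r, ht0, ht, hc, hr, hmem⟩ := h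
  have hc₁ : Tendsto (fun i => (c i).1) atTop (𝓝 u) := (continuous_fst.tendsto _).comp hc
  have hc₂ : Tendsto (fun i => (c i).2) atTop (𝓝 v) := (continuous_snd.tendsto _).comp hc
  set xs : ℕ → E := fun i => xb + t i • (c i).1
  have hxs : Tendsto xs atTop (𝓝 xb) := by simpa using tendsto_const_nhds.add (ht.smul hc₁)
  have hfd : Tendsto (fun i => fderiv ℝ g (xs i)) atTop (𝓝 (fderiv ℝ g xb)) :=
    hcont.tendsto.comp hxs
  set a : ℕ → E →L[ℝ] ℝ := fun i => (r i).comp (ContinuousLinearMap.inl ℝ E Y)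
  set b : ℕ → Y →L[ℝ] ℝ := fun i => (r i).comp (ContinuousLinearMap.inr ℝ E Y)
  have ha : Tendsto a atTop (𝓝 p) := by
    simpa using hr.clm_comp (tendsto_const_nhds (x := ContinuousLinearMap.inl ℝ E Y))
  have hb : Tendsto b atTop (𝓝 q) := by
    simpa using hr.clm_comp (tendsto_const_nhds (x := ContinuousLinearMap.inr ℝ E Y))
  have hsplit : ∀ᶠ i in atTop, a i - (b i).comp (fderiv ℝ g (xs i)) ∈ frechetNC D (xs i) ∧
      b i ∈ frechetNC K (g (xs i) + (yb + t i • (c i).2)) := by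
    filter_upwards [hxs.eventually hdiff] with i hi
    rw [← pairFun_mem_frechetNC_constraintGraph_iff hi.hasFDerivAt, pairFun_comp_inl_comp_inr]
    exact hmem i
  refine ⟨mem_dirLimitingNC_of_eventually ht0 ht hc₁ (ha.sub (hb.clm_comp hfd))
    (hsplit.mono fun i hi => hi.1), mem_dirLimitingNC_of_eventually
      (us := fun i => (c i).2 + (t i)⁻¹ • (g (xs i) - g xb)) ht0 ht
      (hc₂.add (hdiff.self_of_nhds.hasFDerivAt.tendsto_slope ht0 ht hc₁)) hb
      (hsplit.mono fun i hi => ?_)⟩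
  convert hi.2 using 2
  rw [smul_add, smul_inv_smul₀ (ht0 i).ne']
  abel

theorem pairFun_mem_dirLimitingNC_constraintGraph_of_tendsto
    (hdiff : ∀ᶠ x in 𝓝 xb, DifferentiableAt ℝ g x) (hcont : ContinuousAt (fderiv ℝ g) xb)
    {t : ℕ → ℝ} (ht0 : ∀ i, 0 < t i) (ht : Tendsto t atTop (𝓝 0))
    {us : ℕ → E} {ps : ℕ → E →L[ℝ] ℝ} (hus : Tendsto us atTop (𝓝 u))
    (hps : Tendsto ps atTop (𝓝 (p - q.comp (fderiv ℝ g xb))))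
    (hpD : ∀ i, ps i ∈ frechetNC D (xb + t i • us i))
    {ws : ℕ → Y} {qs : ℕ → Y →L[ℝ] ℝ} (hws : Tendsto ws atTop (𝓝 (v + fderiv ℝ g xb u)))
    (hqs : Tendsto qs atTop (𝓝 q)) (hqK : ∀ i, qs i ∈ frechetNC K (g xb + yb + t i • ws i)) :
    pairFun p q ∈ dirLimitingNC (constraintGraph D K g) (xb, yb) (u, v) := by
  set xs : ℕ → E := fun i => xb + t i • us i
  have hxs : Tendsto xs atTop (𝓝 xb) := by simpa using tendsto_const_nhds.add (ht.smul hus)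
  have hfd : Tendsto (fun i => fderiv ℝ g (xs i)) atTop (𝓝 (fderiv ℝ g xb)) :=
    hcont.tendsto.comp hxs
  have hslope := hdiff.self_of_nhds.hasFDerivAt.tendsto_slope ht0 ht hus
  refine mem_dirLimitingNC_of_eventually
    (us := fun i => (us i, ws i - (t i)⁻¹ • (g (xs i) - g xb)))
    (ps := fun i => pairFun (ps i + (qs i).comp (fderiv ℝ g (xs i))) (qs i)) ht0 ht
    (hus.prodMk_nhds (by simpa using hws.sub hslope))
    (by simpa using tendsto_pairFun (hps.add (hqs.clm_comp hfd)) hqs) ?_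
  filter_upwards [hxs.eventually hdiff] with i hi
  refine (pairFun_mem_frechetNC_constraintGraph_iff hi.hasFDerivAt).2
    ⟨by simpa using hpD i, ?_⟩
  convert hqK i using 2
  simp only [Prod.smul_snd, smul_sub, smul_inv_smul₀ (ht0 i).ne']
  abel

theorem pairFun_mem_dirLimitingNC_constraintGraph
    (hdiff : ∀ᶠ x in 𝓝 xb, DifferentiableAt ℝ g x) (hcont : ContinuousAt (fderiv ℝ g) xb)
    (hreg : DirRegularAt D xb u ∨ DirRegularAt K (g xb + yb) (v + fderiv ℝ g xb u))
    (hD : p - q.comp (fderiv ℝ g xb) ∈ dirLimitingNC D xb u)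
    (hK : q ∈ dirLimitingNC K (g xb + yb) (v + fderiv ℝ g xb u)) :
    pairFun p q ∈ dirLimitingNC (constraintGraph D K g) (xb, yb) (u, v) := by
  rcases hreg with hreg | hreg
  · obtain ⟨t, ws, qs, ht0, ht, hws, hqs, hqK⟩ := hK
    obtain ⟨us, ps, hus, hps, hpD⟩ := hreg.exists_seq hD ht0 ht
    exact pairFun_mem_dirLimitingNC_constraintGraph_of_tendsto hdiff hcont ht0 ht hus hps hpD
      hws hqs hqK
  · obtain ⟨t, us, ps, ht0, ht, hus, hps, hpD⟩ := hD
    obtain ⟨ws, qs, hws, hqs, hqK⟩ := hreg.exists_seq hK ht0 ht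
    exact pairFun_mem_dirLimitingNC_constraintGraph_of_tendsto hdiff hcont ht0 ht hus hps hpD
      hws hqs hqK

theorem pairFun_mem_dirLimitingNC_constraintGraph_iff
    (hdiff : ∀ᶠ x in 𝓝 xb, DifferentiableAt ℝ g x) (hcont : ContinuousAt (fderiv ℝ g) xb)
    (hreg : DirRegularAt D xb u ∨ DirRegularAt K (g xb + yb) (v + fderiv ℝ g xb u)) :
    pairFun p q ∈ dirLimitingNC (constraintGraph D K g) (xb, yb) (u, v) ↔
      p - q.comp (fderiv ℝ g xb) ∈ dirLimitingNC D xb u ∧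
        q ∈ dirLimitingNC K (g xb + yb) (v + fderiv ℝ g xb u) :=
  ⟨mem_dirLimitingNC_of_pairFun_mem_constraintGraph hdiff hcont,
    fun h => pairFun_mem_dirLimitingNC_constraintGraph hdiff hcont hreg h.1 h.2⟩

theorem mem_pdDeriv_constraintGraph_iff
    (hdiff : ∀ᶠ x in 𝓝 xb, DifferentiableAt ℝ g x) (hcont : ContinuousAt (fderiv ℝ g) xb)
    (hreg : DirRegular D xb ∨ DirRegular K (g xb + yb)) {vs : Y →L[ℝ] ℝ} {us : E →L[ℝ] ℝ} :
    (us, v) ∈ pdDeriv (constraintGraph D K g) (xb, yb) u vs ↔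
      us + vs.comp (fderiv ℝ g xb) ∈ dirLimitingNC D xb u ∧
        -vs ∈ dirLimitingNC K (g xb + yb) (v + fderiv ℝ g xb u) := by
  rw [pdDeriv, mem_ofPred_eq,
    pairFun_mem_dirLimitingNC_constraintGraph_iff hdiff hcont (hreg.imp (· u) (· _)),
    ContinuousLinearMap.neg_comp, sub_neg_eq_add]

end DirectionalNormals

theorem statement17_general
    (D : Set E) (K : Set Y) (g : E → Y) (xb : E)
    (hC1 : ∃ U ∈ 𝓝 xb, ContDiffOn ℝ 1 g U)
    (hreg : DirRegular D xb ∨ DirRegular K (g xb)) :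
    rgL {p : E × Y | p.1 ∈ D ∧ g p.1 + p.2 ∈ K} (xb, 0) =
      ⨅ (u : E) (vs : Y →L[ℝ] ℝ) (us : E →L[ℝ] ℝ) (v : Y)
        (_ : ‖u‖ = 1) (_ : ‖vs‖ = 1)
        (_ : us + vs.comp (fderiv ℝ g xb) ∈ dirLimitingNC D xb u)
        (_ : -vs ∈ dirLimitingNC K (g xb) (v + fderiv ℝ g xb u)),
        ENNReal.ofReal (max ‖us‖ ‖v‖) := by
  obtain ⟨U, hU, hgU⟩ := hC1
  have hdiff : ∀ᶠ x in 𝓝 xb, DifferentiableAt ℝ g x :=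
    (hgU.differentiableOn one_ne_zero).eventually_differentiableAt hU
  have hcont : ContinuousAt (fderiv ℝ g) xb :=
    (hgU.contDiffAt hU).continuousAt_fderiv one_ne_zero
  rw [← add_zero (g xb)] at hreg
  change rgL (constraintGraph D K g) (xb, 0) = _
  simp only [rgL, iInf_prod, mem_pdDeriv_constraintGraph_iff hdiff hcont hreg, add_zero, iInf_and]

/-- representation of `rg[F](xb,0)` for the constraint system
`x ∈ D`, `g(x) ∈ K`, with `F(x) = K - g(x)` for `x ∈ D` and `∅` otherwise. -/
theorem statement17 [FiniteDimensional ℝ E] [FiniteDimensional ℝ Y]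
    (D : Set E) (K : Set Y) (hD : IsClosed D) (hK : IsClosed K)
    (g : E → Y) (xb : E) (hxb : xb ∈ D) (hgxb : g xb ∈ K)
    (hC1 : ∃ U ∈ 𝓝 xb, ContDiffOn ℝ 1 g U)
    (hreg : DirRegular D xb ∨ DirRegular K (g xb)) :
    rgL {p : E × Y | p.1 ∈ D ∧ g p.1 + p.2 ∈ K} (xb, 0) =
      ⨅ (u : E) (vs : Y →L[ℝ] ℝ) (us : E →L[ℝ] ℝ) (v : Y)
        (_ : ‖u‖ = 1) (_ : ‖vs‖ = 1)
        (_ : us + vs.comp (fderiv ℝ g xb) ∈ dirLimitingNC D xb u)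
        (_ : -vs ∈ dirLimitingNC K (g xb) (v + fderiv ℝ g xb u)),
        ENNReal.ofReal (max ‖us‖ ‖v‖) :=
  statement17_general D K g xb hC1 hreg
end
end

section
/- Let (τ_k) be a strictly decreasing sequence of positive real numbers converging to 0. Then there exists a function χ: ℝ → ℝ with χ(0) = 0 that is Lipschitz continuous on ℝ with Lipschitz constant 1, is constant on a neighborhood of each τ_k (hence differentiable at each τ_k with derivative 0), and satisfies lim_{k→∞} χ(τ_k)/τ_k = 1. -/
/-!
Take `χ` to be the primitive, vanishing at `0`, of the indicator of the complement of an open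
set `U` containing every `τ k`: it is `1`-Lipschitz, constant near each `τ k`, and
`τ k - χ (τ k)` is the length of `(0, τ k] ∩ U`. Let `U` be the union of the balls around `τ k`
of radius at most `2⁻ᵏ τ k` and at most `τ k - τ (k + 1)`. Then only the balls around `τ j` with
`j ≥ k` meet `(0, τ k]`, and their total length is at most `4 · 2⁻ᵏ τ k`, so
`χ (τ k) / τ k → 1`.
-/

open Filter Topology MeasureTheory Set Metric

noncomputable section

def flattenOn (U : Set ℝ) (t : ℝ) : ℝ :=
  ∫ s in (0 : ℝ)..t, Uᶜ.indicator 1 s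

section flattenOn

variable {U : Set ℝ}

theorem flattenOn_zero (U : Set ℝ) : flattenOn U 0 = 0 :=
  intervalIntegral.integral_same

theorem intervalIntegrable_indicator_one (hU : MeasurableSet U) (a b : ℝ) :
    IntervalIntegrable (U.indicator (1 : ℝ → ℝ)) volume a b := by
  rw [intervalIntegrable_iff]
  exact (integrableOn_const measure_Ioc_lt_top.ne).indicator hU

theorem flattenOn_sub_flattenOn (hU : MeasurableSet U) (s t : ℝ) :
    flattenOn U s - flattenOn U t = ∫ u in t..s, Uᶜ.indicator 1 u :=
  intervalIntegral.integral_interval_sub_left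
    (intervalIntegrable_indicator_one hU.compl _ _) (intervalIntegrable_indicator_one hU.compl _ _)

theorem lipschitzWith_flattenOn (hU : MeasurableSet U) : LipschitzWith 1 (flattenOn U) := by
  refine LipschitzWith.of_dist_le_mul fun s t => ?_
  rw [dist_eq_norm (E := ℝ), Real.dist_eq, flattenOn_sub_flattenOn hU, NNReal.coe_one]
  refine intervalIntegral.norm_integral_le_of_norm_le_const fun x _ => ?_
  simpa using norm_indicator_le_norm_self (s := Uᶜ) (1 : ℝ → ℝ) x

theorem flattenOn_eventually_eq (hU : MeasurableSet U) {x : ℝ} (hx : U ∈ 𝓝 x) :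
    ∀ᶠ t in 𝓝 x, flattenOn U t = flattenOn U x := by
  obtain ⟨r, hr, hball⟩ := Metric.mem_nhds_iff.1 hx
  filter_upwards [ball_mem_nhds x hr] with t ht
  rw [← sub_eq_zero, flattenOn_sub_flattenOn hU]
  refine intervalIntegral.integral_zero_ae (ae_of_all _ fun u hu => ?_)
  have hu : u ∈ U := hball <| (convex_ball x r).ordConnected.uIcc_subset (mem_ball_self hr) ht
    (uIoc_subset_uIcc hu)
  simp [hu]

theorem sub_flattenOn_eq_measureReal (hU : MeasurableSet U) {t : ℝ} (ht : 0 ≤ t) :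
    t - flattenOn U t = volume.real (Ioc 0 t ∩ U) := by
  rw [flattenOn, indicator_compl]
  simp only [Pi.sub_apply, Pi.one_apply]
  rw [intervalIntegral.integral_sub intervalIntegrable_const
    (intervalIntegrable_indicator_one hU _ _), intervalIntegral.integral_const,
    intervalIntegral.integral_of_le ht,
    integral_indicator_one hU, measureReal_restrict_apply hU, inter_comm]
  simp

end flattenOn

section flatSet

variable {τ : ℕ → ℝ}

def flatRadius (τ : ℕ → ℝ) (k : ℕ) : ℝ :=
  min ((1 / 2) ^ k * τ k) (τ k - τ (k + 1))

def flatSet (τ : ℕ → ℝ) : Set ℝ :=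
  ⋃ k, ball (τ k) (flatRadius τ k)

theorem flatRadius_pos (hpos : ∀ k, 0 < τ k) (hanti : StrictAnti τ) (k : ℕ) :
    0 < flatRadius τ k :=
  lt_min (by have := hpos k; positivity) (sub_pos.2 (hanti k.lt_succ_self))

theorem isOpen_flatSet : IsOpen (flatSet τ) :=
  isOpen_iUnion fun _ => isOpen_ball

theorem flatSet_mem_nhds (hpos : ∀ k, 0 < τ k) (hanti : StrictAnti τ) (k : ℕ) :
    flatSet τ ∈ 𝓝 (τ k) :=
  mem_of_superset (ball_mem_nhds _ (flatRadius_pos hpos hanti k)) (subset_iUnion_of_subset k le_rfl)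

theorem Ioc_inter_flatSet_subset (hanti : StrictAnti τ) (k : ℕ) :
    Ioc 0 (τ k) ∩ flatSet τ ⊆ ⋃ j, ball (τ (k + j)) (flatRadius τ (k + j)) := by
  rintro s ⟨hs, hsU⟩
  obtain ⟨m, hm⟩ := mem_iUnion.1 hsU
  -- a ball around `τ m` with `m < k` lies above `τ (m + 1) ≥ τ k`
  have hkm : k ≤ m := by
    by_contra! hmk
    have h1 : τ k ≤ τ (m + 1) := hanti.antitone hmk
    have h2 : flatRadius τ m ≤ τ m - τ (m + 1) := min_le_right _ _
    have h3 := (mem_ball'.1 hm)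
    rw [Real.dist_eq, abs_lt] at h3
    linarith [hs.2]
  exact mem_iUnion.2 ⟨m - k, by rwa [Nat.add_sub_cancel' hkm]⟩

theorem measureReal_Ioc_inter_flatSet_le (hpos : ∀ k, 0 < τ k) (hanti : StrictAnti τ) (k : ℕ) :
    volume.real (Ioc 0 (τ k) ∩ flatSet τ) ≤ 4 * (1 / 2) ^ k * τ k := by
  have hball (j : ℕ) : volume (ball (τ (k + j)) (flatRadius τ (k + j)))
      ≤ ENNReal.ofReal (2 * (1 / 2) ^ k * τ k * (1 / 2) ^ j) := by
    rw [Real.volume_ball]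
    refine ENNReal.ofReal_le_ofReal ?_
    calc 2 * flatRadius τ (k + j) ≤ 2 * ((1 / 2) ^ (k + j) * τ (k + j)) := by
          gcongr; exact min_le_left _ _
      _ ≤ 2 * ((1 / 2) ^ (k + j) * τ k) := by gcongr; exact hanti.antitone (k.le_add_right j)
      _ = 2 * (1 / 2) ^ k * τ k * (1 / 2) ^ j := by ring
  have hgeom : ∑' j : ℕ, 2 * (1 / 2 : ℝ) ^ k * τ k * (1 / 2) ^ j = 4 * (1 / 2) ^ k * τ k := by
    rw [tsum_mul_left, tsum_geometric_two]
    ring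
  refine ENNReal.toReal_le_of_le_ofReal (by have := hpos k; positivity) ?_
  calc volume (Ioc 0 (τ k) ∩ flatSet τ)
      ≤ volume (⋃ j, ball (τ (k + j)) (flatRadius τ (k + j))) :=
        measure_mono (Ioc_inter_flatSet_subset hanti k)
    _ ≤ ∑' j, volume (ball (τ (k + j)) (flatRadius τ (k + j))) := measure_iUnion_le _
    _ ≤ ∑' j : ℕ, ENNReal.ofReal (2 * (1 / 2) ^ k * τ k * (1 / 2) ^ j) := ENNReal.tsum_le_tsum hball
    _ = ENNReal.ofReal (4 * (1 / 2) ^ k * τ k) := by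
        rw [← ENNReal.ofReal_tsum_of_nonneg (fun j => by have := hpos k; positivity)
          (summable_geometric_two.mul_left _), hgeom]

end flatSet

end

theorem statement18_general (τ : ℕ → ℝ) (hpos : ∀ k, 0 < τ k) (hanti : StrictAnti τ) :
    ∃ χ : ℝ → ℝ, χ 0 = 0 ∧ LipschitzWith 1 χ ∧
      (∀ k, ∀ᶠ t in 𝓝 (τ k), χ t = χ (τ k)) ∧
      (∀ k, HasDerivAt χ 0 (τ k)) ∧
      Tendsto (fun k => χ (τ k) / τ k) atTop (𝓝 1) := by
  have hU := isOpen_flatSet (τ := τ) |>.measurableSet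
  have hconst (k : ℕ) := flattenOn_eventually_eq hU (flatSet_mem_nhds hpos hanti k)
  refine ⟨flattenOn (flatSet τ), flattenOn_zero _, lipschitzWith_flattenOn hU, hconst,
    fun k => (hasDerivAt_const _ _).congr_of_eventuallyEq (hconst k), ?_⟩
  have hbounds (k : ℕ) : 1 - 4 * (1 / 2) ^ k ≤ flattenOn (flatSet τ) (τ k) / τ k ∧
      flattenOn (flatSet τ) (τ k) / τ k ≤ 1 := by
    have hgap := sub_flattenOn_eq_measureReal hU (hpos k).le
    have hvol := measureReal_Ioc_inter_flatSet_le hpos hanti k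
    rw [le_div_iff₀ (hpos k), div_le_one (hpos k)]
    constructor <;> linarith [measureReal_nonneg (μ := volume) (s := Ioc 0 (τ k) ∩ flatSet τ)]
  have hlower : Tendsto (fun k : ℕ => 1 - 4 * (1 / 2 : ℝ) ^ k) atTop (𝓝 1) := by
    simpa using ((tendsto_pow_atTop_nhds_zero_of_lt_one (by norm_num) (by norm_num :
      (1 / 2 : ℝ) < 1)).const_mul 4).const_sub 1
  exact tendsto_of_tendsto_of_tendsto_of_le_of_le hlower tendsto_const_nhds
    (fun k => (hbounds k).1) (fun k => (hbounds k).2)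

/-- given a strictly decreasing positive sequence `τ k → 0`, there
is a function `χ : ℝ → ℝ` with `χ 0 = 0`, Lipschitz with constant 1, locally
constant around each `τ k` (hence differentiable there with derivative 0), and
with `χ (τ k) / τ k → 1`. -/
theorem statement18 (τ : ℕ → ℝ) (hpos : ∀ k, 0 < τ k) (hanti : StrictAnti τ)
    (hlim : Tendsto τ atTop (𝓝 0)) :
    ∃ χ : ℝ → ℝ, χ 0 = 0 ∧ LipschitzWith 1 χ ∧
      (∀ k, ∀ᶠ t in 𝓝 (τ k), χ t = χ (τ k)) ∧
      (∀ k, HasDerivAt χ 0 (τ k)) ∧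
      Tendsto (fun k => χ (τ k) / τ k) atTop (𝓝 1) :=
  statement18_general τ hpos hanti
end

section
/- Let A ⊆ ℝⁿ be closed and x̄ ∈ A, with ℝⁿ carrying an arbitrary norm. Then (i) for any direction u ∉ T_A(x̄) one has N̄_A(x̄;u) = ∅, and (ii) N̄_A(x̄) = (⋃_{‖u‖=1} N̄_A(x̄;u)) ∪ N_A(x̄). -/
open Filter Topology Set ENNReal NNReal

noncomputable section

variable {E Y : Type*} [NormedAddCommGroup E] [NormedSpace ℝ E]
  [NormedAddCommGroup Y] [NormedSpace ℝ Y]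

/-- (i) the directional limiting normal cone is empty in
non-tangent directions; (ii) the limiting normal cone is the union of the
directional limiting normal cones over unit directions and the Fréchet
normal cone. -/
theorem statement19 [FiniteDimensional ℝ E]
    (A : Set E) (hA : IsClosed A) (xb : E) (hxb : xb ∈ A) :
    (∀ u : E, u ∉ tangentConeB A xb → dirLimitingNC A xb u = ∅) ∧
    limitingNC A xb =
      (⋃ u ∈ {u : E | ‖u‖ = 1}, dirLimitingNC A xb u) ∪ frechetNC A xb := by
  constructor
  · intro u hu
    ext p
    simp only [Set.mem_empty_iff_false, iff_false]
    rintro ⟨t, us, ps, hpos, ht, hus, hps, hmem⟩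
    exact hu ⟨t, us, hpos, ht, hus, fun i => (hmem i).1⟩
  · ext p
    constructor
    · rintro ⟨xs, ps, hxs, hps, hmem⟩
      by_cases hfreq : ∃ᶠ i in atTop, xs i = xb
      · right
        obtain ⟨φ, hφ, hφeq⟩ := Filter.extraction_of_frequently_atTop hfreq
        refine ⟨hxb, fun u hu => ?_⟩
        have h1 : Tendsto (fun n => ps (φ n) u) atTop (𝓝 (p u)) :=
          ((ContinuousLinearMap.apply ℝ ℝ u).continuous.tendsto p).comp
            (hps.comp hφ.tendsto_atTop)
        refine le_of_tendsto h1 (Filter.Eventually.of_forall fun n => ?_)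
        have h2 := hmem (φ n)
        rw [hφeq n] at h2
        exact h2.2 u hu
      · left
        rw [Filter.not_frequently] at hfreq
        obtain ⟨N, hN⟩ := Filter.eventually_atTop.mp hfreq
        set ys : ℕ → E := fun i => xs (i + N) with hys
        have hys_ne : ∀ i, ys i ≠ xb := fun i => hN (i + N) (Nat.le_add_left _ _)
        have hys_t : Tendsto ys atTop (𝓝 xb) := hxs.comp (tendsto_add_atTop_nat N)
        set qs : ℕ → (E →L[ℝ] ℝ) := fun i => ps (i + N) with hqs
        have hqs_t : Tendsto qs atTop (𝓝 p) := hps.comp (tendsto_add_atTop_nat N)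
        set t : ℕ → ℝ := fun i => ‖ys i - xb‖ with htdef
        have htpos : ∀ i, 0 < t i := fun i =>
          norm_pos_iff.mpr (sub_ne_zero.mpr (hys_ne i))
        have ht0 : Tendsto t atTop (𝓝 0) := by
          have h3 : Tendsto (fun i => ys i - xb) atTop (𝓝 0) := by
            simpa using hys_t.sub (tendsto_const_nhds (x := xb))
          simpa using h3.norm
        set vs : ℕ → E := fun i => (t i)⁻¹ • (ys i - xb) with hvsdef
        have hvs_sphere : ∀ i, vs i ∈ Metric.sphere (0:E) 1 := by
          intro i
          rw [mem_sphere_zero_iff_norm]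
          rw [hvsdef]
          simp only [norm_smul, Real.norm_eq_abs, abs_of_pos (inv_pos.mpr (htpos i))]
          exact inv_mul_cancel₀ (htpos i).ne'
        obtain ⟨u, huS, φ, hφ, hvu⟩ :=
          (isCompact_sphere (0:E) 1).tendsto_subseq hvs_sphere
        refine Set.mem_biUnion
          (show u ∈ {u : E | ‖u‖ = 1} from mem_sphere_zero_iff_norm.mp huS) ?_
        refine ⟨t ∘ φ, vs ∘ φ, qs ∘ φ, fun i => htpos _, ht0.comp hφ.tendsto_atTop,
          hvu, hqs_t.comp hφ.tendsto_atTop, fun i => ?_⟩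
        have key : xb + t (φ i) • vs (φ i) = ys (φ i) := by
          rw [hvsdef]
          simp [smul_smul, mul_inv_cancel₀ (htpos (φ i)).ne']
        show qs (φ i) ∈ frechetNC A (xb + (t ∘ φ) i • (vs ∘ φ) i)
        rw [show (t ∘ φ) i • (vs ∘ φ) i = t (φ i) • vs (φ i) from rfl, key]
        exact hmem (φ i + N)
    · rintro (h | h)
      · simp only [Set.mem_iUnion] at h
        obtain ⟨u, hu, t, us, ps, hpos, ht, hus, hps, hmem⟩ := h
        refine ⟨fun i => xb + t i • us i, ps, ?_, hps, hmem⟩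
        have : Tendsto (fun i => xb + t i • us i) atTop (𝓝 (xb + (0:ℝ) • u)) :=
          tendsto_const_nhds.add (ht.smul hus)
        simpa using this
      · exact ⟨fun _ => xb, fun _ => p, tendsto_const_nhds, tendsto_const_nhds,
          fun _ => h⟩

end
end
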